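/- arXiv:1006.5686 — 8 statements merged into one kernel-verified Lean document; each statement's English description precedes it below -/
import Mathlib

section
/- For every integer n ≥ 2, the n-dimensional Lebesgue volume of Λ equals the integral over the simplex S = {p ∈ ℝ^n : p_i ≥ 0 for all i, Σ_{i=1}^n p_i ≤ 1} of the function p ↦ (∏_{i=1}^n (1−p_i))^{n−2} · (1 − Σ_{i=1}^n p_i). -/
open Finset MeasureTheory Filter Topology

namespace Stmt1Aux

/-- The boundary map. -/
def Fm (n : ℕ) (q : Fin n → ℝ) : Fin n → ℝ :=
  fun i => q i * ∏ j ∈ univ.erase i, (1 - q j)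

def Sfull (n : ℕ) : Set (Fin n → ℝ) := {p | (∀ i, 0 ≤ p i) ∧ ∑ i, p i ≤ 1}

def Sopen (n : ℕ) : Set (Fin n → ℝ) := {p | (∀ i, 0 < p i) ∧ ∑ i, p i < 1}

/-- Weierstrass product inequality. -/
lemma one_add_sum_le_prod {ι : Type*} {s : Finset ι} {a : ι → ℝ} (h : ∀ i ∈ s, 0 ≤ a i) :
    1 + ∑ i ∈ s, a i ≤ ∏ i ∈ s, (1 + a i) := by
  classical
  induction s using Finset.cons_induction with
  | empty => simp
  | cons i s his ih =>
    rw [Finset.sum_cons, Finset.prod_cons]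
    have h0 : 0 ≤ a i := h i (Finset.mem_cons_self _ _)
    have h1 : ∀ j ∈ s, 0 ≤ a j := fun j hj => h j (Finset.mem_cons_of_mem hj)
    have h2 : 0 ≤ ∑ j ∈ s, a j := Finset.sum_nonneg h1
    have := ih h1
    nlinarith

/-- membership facts -/
lemma mem_Sfull_le_one {n : ℕ} {q : Fin n → ℝ} (hq : q ∈ Sfull n) (i : Fin n) : q i ≤ 1 := by
  obtain ⟨h0, h1⟩ := hq
  calc q i ≤ ∑ j, q j := Finset.single_le_sum (fun j _ => h0 j) (Finset.mem_univ i)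
  _ ≤ 1 := h1


/-- Step 1: the witness `p` can be taken in the simplex. -/
lemma exists_simplex_witness {n : ℕ} {x p : Fin n → ℝ} (hx : ∀ i, 0 ≤ x i)
    (hp : ∀ i, p i ∈ Set.Icc (0:ℝ) 1) (hxp : ∀ i, x i ≤ Fm n p i) :
    ∃ q ∈ Sfull n, ∀ i, x i ≤ Fm n q i := by
  classical
  by_cases hone : ∃ i0, p i0 = 1
  · -- some coordinate equals 1
    obtain ⟨i0, hi0⟩ := hone
    refine ⟨fun j => if j = i0 then x i0 else 0, ⟨?_, ?_⟩, ?_⟩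
    · intro i; dsimp only; split <;> simp [hx i0]
    · rw [Finset.sum_ite_eq' univ i0]
      simp only [Finset.mem_univ, if_true]
      -- x i0 ≤ 1
      have h1 : x i0 ≤ Fm n p i0 := hxp i0
      have h2 : Fm n p i0 ≤ 1 := by
        unfold Fm
        rw [hi0, one_mul]
        apply Finset.prod_le_one
        · intro j hj; have := (hp j).2; linarith
        · intro j hj; have := (hp j).1; linarith
      linarith
    · intro i
      by_cases hii : i = i0
      · subst hii
        unfold Fm
        simp only [if_pos rfl]
        have : ∀ j ∈ univ.erase i, (1 - if j = i then x i else 0) = 1 := by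
          intro j hj
          rw [if_neg (Finset.ne_of_mem_erase hj)]
          ring
        rw [Finset.prod_congr rfl this]
        simp
      · -- x i = 0 since Fm n p i = 0
        have hFp : Fm n p i = 0 := by
          unfold Fm
          have : (∏ j ∈ univ.erase i, (1 - p j)) = 0 := by
            apply Finset.prod_eq_zero (i := i0)
            · exact Finset.mem_erase.2 ⟨fun h => hii h.symm, Finset.mem_univ _⟩
            · rw [hi0]; ring
          rw [this, mul_zero]
        have hx0 : x i = 0 := le_antisymm (by rw [← hFp]; exact hxp i) (hx i)
        rw [hx0]
        unfold Fm
        apply mul_nonneg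
        · dsimp only; split <;> simp [hx i0]
        · apply Finset.prod_nonneg
          intro j hj
          dsimp only; split
          · have h1 : x i0 ≤ Fm n p i0 := hxp i0
            have h2 : Fm n p i0 ≤ 1 := by
              unfold Fm
              rw [hi0, one_mul]
              apply Finset.prod_le_one
              · intro j hj; have := (hp j).2; linarith
              · intro j hj; have := (hp j).1; linarith
            linarith
          · linarith
  · push_neg at hone
    have hplt : ∀ i, p i < 1 := fun i => lt_of_le_of_ne (hp i).2 (hone i)
    by_cases hsum : ∑ i, p i ≤ 1
    · exact ⟨p, ⟨fun i => (hp i).1, hsum⟩, hxp⟩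
    · push_neg at hsum
      -- scaling argument
      set g : ℝ → Fin n → ℝ := fun t j => 1 - p j + t * p j with hg
      have hgpos : ∀ t ∈ Set.Icc (0:ℝ) 1, ∀ j, 0 < g t j := by
        intro t ht j
        have := hplt j
        have h0 := (hp j).1
        have : 0 ≤ t * p j := mul_nonneg ht.1 h0
        dsimp [g]; nlinarith [hplt j]
      set φ : ℝ → Fin n → ℝ := fun t i => t * p i / g t i with hφ
      set σ : ℝ → ℝ := fun t => ∑ i, φ t i with hσ
      have hσc : ContinuousOn σ (Set.Icc 0 1) := by
        apply continuousOn_finset_sum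
        intro i _
        apply ContinuousOn.div
        · exact (continuous_id.mul continuous_const).continuousOn
        · exact ((continuous_const.sub continuous_const).add
            (continuous_id.mul continuous_const)).continuousOn
        · intro t ht; exact (hgpos t ht i).ne'
      have hσ0 : σ 0 = 0 := by simp [hσ, hφ]
      have hσ1 : σ 1 = ∑ i, p i := by
        apply Finset.sum_congr rfl
        intro i _
        dsimp [φ, g]
        have : (1:ℝ) - p i + 1 * p i = 1 := by ring
        rw [this]; ring
      have h1mem : (1:ℝ) ∈ Set.Icc (σ 0) (σ 1) := by
        constructor
        · rw [hσ0]; norm_num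
        · rw [hσ1]; exact hsum.le
      obtain ⟨t, ht, hσt⟩ := intermediate_value_Icc (by norm_num : (0:ℝ) ≤ 1) hσc h1mem
      have htpos : 0 < t := by
        rcases lt_or_eq_of_le ht.1 with h | h
        · exact h
        · exfalso; rw [← h] at hσt; rw [hσ0] at hσt; norm_num at hσt
      -- q := φ t
      refine ⟨φ t, ⟨?_, ?_⟩, ?_⟩
      · intro i
        apply div_nonneg (mul_nonneg htpos.le (hp i).1) (hgpos t ht i).le
      · exact le_of_eq hσt
      · intro i
        refine le_trans (hxp i) ?_
        -- Fm n p i ≤ Fm n (φ t) i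
        -- key: ∏ g t j ≤ t
        have hkey : ∏ j, g t j ≤ t := by
          set lam : ℝ := (1 - t) / t with hlam
          have hlam0 : 0 ≤ lam := div_nonneg (by linarith [ht.2]) htpos.le
          have hsum1 : (∑ i, φ t i) = 1 := hσt
          have hW : 1 + lam ≤ ∏ j, (1 + lam * φ t j) := by
            have := one_add_sum_le_prod (s := univ) (a := fun j => lam * φ t j) ?_
            · rwa [← Finset.mul_sum, hsum1, mul_one] at this
            · intro j _
              exact mul_nonneg hlam0
                (div_nonneg (mul_nonneg htpos.le (hp j).1) (hgpos t ht j).le)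
          have hgone : ∀ j, g t j * (1 + lam * φ t j) = 1 := by
            intro j
            have hne : (1 - p j + t * p j) ≠ 0 := by
              have h := hgpos t ht j; simp only [hg] at h; exact h.ne'
            simp only [hφ, hg, hlam]
            have hne' : 1 - p j + p j * t ≠ 0 := by rw [mul_comm]; exact hne
            field_simp
            ring
          have hprod1 : (∏ j, g t j) * ∏ j, (1 + lam * φ t j) = 1 := by
            rw [← Finset.prod_mul_distrib]
            simp [hgone]
          have hgp : 0 < ∏ j, g t j := Finset.prod_pos (fun j _ => hgpos t ht j)
          have h1lam : 1 + lam = 1 / t := by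
            simp only [hlam]; field_simp; ring
          have h2 : (∏ j, g t j) * (1 + lam) ≤ 1 := by
            calc (∏ j, g t j) * (1 + lam) ≤ (∏ j, g t j) * ∏ j, (1 + lam * φ t j) :=
                  mul_le_mul_of_nonneg_left hW hgp.le
              _ = 1 := hprod1
          rw [h1lam, mul_one_div, div_le_one htpos] at h2
          exact h2
        -- now compare Fm
        have h1q : ∀ j, 1 - φ t j = (1 - p j) / g t j := by
          intro j
          have hne : (1 - p j + t * p j) ≠ 0 := by
            have h := hgpos t ht j; simp only [hg] at h; exact h.ne'
          simp only [hφ, hg]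
          field_simp
          ring
        have hFq : Fm n (φ t) i = Fm n p i * (t / ∏ j, g t j) := by
          unfold Fm
          rw [Finset.prod_congr rfl (fun j _ => h1q j)]
          rw [Finset.prod_div_distrib]
          dsimp [φ]
          rw [← Finset.mul_prod_erase univ (g t) (Finset.mem_univ i)]
          field_simp
        rw [hFq]
        have hFp0 : 0 ≤ Fm n p i := by
          apply mul_nonneg (hp i).1
          apply Finset.prod_nonneg
          intro j _; have := hplt j; linarith
        have hgp : 0 < ∏ j, g t j := Finset.prod_pos (fun j _ => hgpos t ht j)
        exact le_mul_of_one_le_right hFp0 ((one_le_div hgp).2 hkey)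

noncomputable def iter (n : ℕ) (x : Fin n → ℝ) : ℕ → Fin n → ℝ
  | 0 => fun _ => 0
  | k+1 => fun i => x i / ∏ j ∈ univ.erase i, (1 - iter n x k j)

/-- Step 2: below the graph on the simplex, we can hit exactly. -/
lemma exists_eq_of_le {n : ℕ} {x q : Fin n → ℝ} (hq : q ∈ Sfull n)
    (hx0 : ∀ i, 0 ≤ x i) (hxq : ∀ i, x i ≤ Fm n q i) :
    ∃ u ∈ Sfull n, Fm n u = x := by
  classical
  obtain ⟨hq0, hqs⟩ := hq
  by_cases hone : ∃ i0, q i0 = 1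
  · obtain ⟨i0, hi0⟩ := hone
    have hz : ∀ j, j ≠ i0 → q j = 0 := by
      intro j hj
      have hsplit : q i0 + ∑ k ∈ univ.erase i0, q k = ∑ k, q k :=
        Finset.add_sum_erase univ q (Finset.mem_univ i0)
      have hsum0 : ∑ k ∈ univ.erase i0, q k = 0 := by
        have h1 : 0 ≤ ∑ k ∈ univ.erase i0, q k := Finset.sum_nonneg fun k _ => hq0 k
        rw [hi0] at hsplit; linarith
      have := (Finset.sum_eq_zero_iff_of_nonneg (fun k _ => hq0 k)).1 hsum0
      exact this j (Finset.mem_erase.2 ⟨hj, Finset.mem_univ _⟩)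
    have hxk : ∀ k, k ≠ i0 → x k = 0 := by
      intro k hk
      have : Fm n q k = 0 := by unfold Fm; rw [hz k hk, zero_mul]
      exact le_antisymm (this ▸ hxq k) (hx0 k)
    have hx1 : x i0 ≤ 1 := by
      have h1 := hxq i0
      have h2 : Fm n q i0 ≤ 1 := by
        unfold Fm
        rw [hi0, one_mul]
        apply Finset.prod_le_one
        · intro j hj; rw [hz j (Finset.ne_of_mem_erase hj)]; norm_num
        · intro j hj; rw [hz j (Finset.ne_of_mem_erase hj)]; norm_num
      linarith
    refine ⟨fun j => if j = i0 then x i0 else 0, ⟨?_, ?_⟩, ?_⟩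
    · intro i; dsimp only; split <;> simp [hx0 i0]
    · rw [Finset.sum_ite_eq' univ i0]; simpa using hx1
    · funext i
      by_cases hii : i = i0
      · subst hii
        unfold Fm
        simp only [if_pos rfl]
        have hall : ∀ j ∈ univ.erase i, (1 - if j = i then x i else 0) = 1 := by
          intro j hj
          rw [if_neg (Finset.ne_of_mem_erase hj)]; ring
        rw [Finset.prod_congr rfl hall]
        simp
      · unfold Fm
        simp only [if_neg hii, zero_mul]
        exact (hxk i hii).symm
  · push_neg at hone
    have hq1 : ∀ j, q j < 1 := fun j => lt_of_le_of_ne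
      (le_trans (Finset.single_le_sum (fun k _ => hq0 k) (Finset.mem_univ j)) hqs) (hone j)
    set u : ℕ → Fin n → ℝ := iter n x with hu
    have hu0 : ∀ i, u 0 i = 0 := fun i => rfl
    have huS : ∀ k i, u (k+1) i = x i / ∏ j ∈ univ.erase i, (1 - u k j) := fun k i => rfl
    have hprodpos : ∀ (v : Fin n → ℝ), (∀ j, v j ≤ q j) → ∀ i,
        0 < ∏ j ∈ univ.erase i, (1 - v j) := by
      intro v hv i
      apply Finset.prod_pos
      intro j _
      have := hq1 j; have := hv j; linarith
    have hprodmono : ∀ (v w : Fin n → ℝ), (∀ j, v j ≤ w j) → (∀ j, w j ≤ q j) → ∀ i,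
        ∏ j ∈ univ.erase i, (1 - w j) ≤ ∏ j ∈ univ.erase i, (1 - v j) := by
      intro v w hvw hwq i
      apply Finset.prod_le_prod
      · intro j _; have := hq1 j; have := hwq j; linarith
      · intro j _; have := hvw j; linarith
    have H : ∀ k, (∀ i, 0 ≤ u k i) ∧ (∀ i, u k i ≤ q i) ∧ (∀ i, u k i ≤ u (k+1) i) := by
      intro k
      induction k with
      | zero =>
        refine ⟨fun i => le_refl 0, fun i => hq0 i, fun i => ?_⟩
        rw [hu0, huS]
        exact div_nonneg (hx0 i) (hprodpos _ (fun j => hq0 j) i).le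
      | succ k ih =>
        obtain ⟨ih0, ih1, ih2⟩ := ih
        have hnext0 : ∀ i, 0 ≤ u (k+1) i := by
          intro i; rw [huS]
          exact div_nonneg (hx0 i) (hprodpos _ ih1 i).le
        have hnext1 : ∀ i, u (k+1) i ≤ q i := by
          intro i
          rw [huS, div_le_iff₀ (hprodpos _ ih1 i)]
          calc x i ≤ Fm n q i := hxq i
            _ = q i * ∏ j ∈ univ.erase i, (1 - q j) := rfl
            _ ≤ q i * ∏ j ∈ univ.erase i, (1 - u k j) :=
                mul_le_mul_of_nonneg_left (hprodmono (u k) q ih1 (fun j => le_refl _) i) (hq0 i)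
        refine ⟨hnext0, hnext1, fun i => ?_⟩
        rw [huS k i, huS (k+1) i]
        exact div_le_div_of_nonneg_left (hx0 i) (hprodpos _ hnext1 i)
          (hprodmono (u k) (u (k+1)) ih2 hnext1 i)
    -- the limit
    set L : Fin n → ℝ := fun i => ⨆ k, u k i with hL
    have hbdd : ∀ i, BddAbove (Set.range (fun k => u k i)) := by
      intro i
      exact ⟨q i, by rintro _ ⟨k, rfl⟩; exact (H k).2.1 i⟩
    have hmono : ∀ i, Monotone (fun k => u k i) :=
      fun i => monotone_nat_of_le_succ (fun k => (H k).2.2 i)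
    have htend : ∀ i, Tendsto (fun k => u k i) atTop (𝓝 (L i)) :=
      fun i => tendsto_atTop_ciSup (hmono i) (hbdd i)
    have hL0 : ∀ i, 0 ≤ L i := by
      intro i
      have h1 : u 0 i ≤ L i := le_ciSup (hbdd i) 0
      rw [hu0] at h1; exact h1
    have hLq : ∀ i, L i ≤ q i := fun i => ciSup_le (fun k => (H k).2.1 i)
    have hPpos : ∀ i, 0 < ∏ j ∈ univ.erase i, (1 - L j) := hprodpos L hLq
    have hfix : ∀ i, L i = x i / ∏ j ∈ univ.erase i, (1 - L j) := by
      intro i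
      have h1 : Tendsto (fun k => u (k+1) i) atTop (𝓝 (L i)) :=
        (htend i).comp (tendsto_add_atTop_nat 1)
      have h2 : Tendsto (fun k => x i / ∏ j ∈ univ.erase i, (1 - u k j)) atTop
          (𝓝 (x i / ∏ j ∈ univ.erase i, (1 - L j))) := by
        apply Tendsto.div tendsto_const_nhds _ (hPpos i).ne'
        apply tendsto_finset_prod
        intro j _
        exact tendsto_const_nhds.sub (htend j)
      have h3 : (fun k => u (k+1) i) = fun k => x i / ∏ j ∈ univ.erase i, (1 - u k j) :=
        funext fun k => huS k i
      rw [h3] at h1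
      exact tendsto_nhds_unique h1 h2
    refine ⟨L, ⟨hL0, ?_⟩, ?_⟩
    · calc ∑ i, L i ≤ ∑ i, q i := Finset.sum_le_sum (fun i _ => hLq i)
        _ ≤ 1 := hqs
    · funext i
      unfold Fm
      rw [hfix i, div_mul_cancel₀ _ (hPpos i).ne']

lemma root_unique {n : ℕ} (hn : 2 ≤ n) {x : Fin n → ℝ} (hx : ∀ i, 0 < x i) {P P' : ℝ}
    (hP : 0 < P) (hle : P ≤ P')
    (hb : ∏ i, (P + x i) = P ^ (n-1)) (hb' : ∏ i, (P' + x i) = P' ^ (n-1))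
    (hc : ∑ i, x i / (P + x i) < 1) : P = P' := by
  by_contra hne
  have hlt : P < P' := lt_of_le_of_ne hle hne
  obtain ⟨m, hm⟩ : ∃ m, n - 1 = m + 1 := ⟨n - 2, by omega⟩
  rw [hm] at hb hb'
  set g : ℝ → ℝ := fun t => (∏ i, (t + x i)) * (t ^ (m+1))⁻¹ with hg
  have hgP : g P = 1 := by
    rw [hg]; dsimp only; rw [hb, mul_inv_cancel₀ (pow_ne_zero _ hP.ne')]
  have hgP' : g P' = 1 := by
    rw [hg]; dsimp only; rw [hb', mul_inv_cancel₀ (pow_ne_zero _ (lt_trans hP hlt).ne')]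
  have hmono : StrictMonoOn g (Set.Icc P P') := by
    apply strictMonoOn_of_deriv_pos (convex_Icc P P')
    · apply ContinuousOn.mul
      · exact (continuous_finset_prod _ (fun i _ => continuous_id.add continuous_const)).continuousOn
      · apply ContinuousOn.inv₀
        · exact (continuous_pow _).continuousOn
        · intro t ht
          exact pow_ne_zero _ (lt_of_lt_of_le hP ht.1).ne'
    · intro t ht
      rw [interior_Icc] at ht
      have ht0 : 0 < t := lt_trans hP ht.1
      have htx : ∀ i, 0 < t + x i := fun i => by have := hx i; linarith
      have hG : 0 < ∏ i, (t + x i) := Finset.prod_pos fun i _ => htx i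
      have hG' : HasDerivAt (fun s => ∏ i, (s + x i))
          (∑ i, ∏ j ∈ univ.erase i, (t + x j)) t := by
        have h := HasDerivAt.fun_finsetProd (u := univ) (f := fun i s => s + x i)
          (f' := fun _ => 1) (x := t) (fun i _ => (hasDerivAt_id t).add_const (x i))
        simpa using h
      have hinv : HasDerivAt (fun s => (s ^ (m+1))⁻¹)
          (-((((m:ℝ)+1)) * t ^ m) / (t ^ (m+1))^2) t := by
        have h := (hasDerivAt_pow (m+1) t).inv (pow_ne_zero _ ht0.ne')
        simp at h; exact h
      have hgd : HasDerivAt g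
          ((∑ i, ∏ j ∈ univ.erase i, (t + x j)) * (t ^ (m+1))⁻¹ +
            (∏ i, (t + x i)) * (-((((m:ℝ)+1)) * t ^ m) / (t ^ (m+1))^2)) t := hG'.mul hinv
      rw [hgd.deriv]
      -- key inequalities
      have hsum : ∑ i, x i / (t + x i) < 1 := by
        refine lt_of_le_of_lt (Finset.sum_le_sum fun i _ => ?_) hc
        refine div_le_div_of_nonneg_left (hx i).le (by have := hx i; linarith) ?_
        have := ht.1; linarith
      have hterm : ∀ i ∈ (univ : Finset (Fin n)), t * ∏ j ∈ univ.erase i, (t + x j) =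
          (∏ j, (t + x j)) - (∏ j, (t + x j)) * (x i / (t + x i)) := by
        intro i _
        have hGe : (t + x i) * ∏ j ∈ univ.erase i, (t + x j) = ∏ j, (t + x j) :=
          Finset.mul_prod_erase univ (fun j => t + x j) (Finset.mem_univ i)
        have hEi : ∏ j ∈ univ.erase i, (t + x j) = (∏ j, (t + x j)) / (t + x i) := by
          rw [eq_div_iff (htx i).ne']; linear_combination hGe
        rw [hEi]
        field_simp [(htx i).ne']
        ring
      have h1 : t * ∑ i, ∏ j ∈ univ.erase i, (t + x j) =
          (n:ℝ) * (∏ j, (t + x j)) - (∏ j, (t + x j)) * ∑ i, x i / (t + x i) := by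
        rw [Finset.mul_sum, Finset.sum_congr rfl hterm, Finset.sum_sub_distrib,
          Finset.sum_const, card_univ, Fintype.card_fin, nsmul_eq_mul, ← Finset.mul_sum]
      have hmn : (m:ℝ) + 2 = (n:ℝ) := by exact_mod_cast congrArg (Nat.cast : ℕ → ℝ) (by omega : m + 2 = n)
      have h2 : (((m:ℝ)+1)) * (∏ j, (t + x j)) < t * ∑ i, ∏ j ∈ univ.erase i, (t + x j) := by
        have h3 : (∏ j, (t + x j)) * ∑ i, x i / (t + x i) < (∏ j, (t + x j)) * 1 :=
          mul_lt_mul_of_pos_left hsum hG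
        rw [h1]; nlinarith
      have heq : (∑ i, ∏ j ∈ univ.erase i, (t + x j)) * (t ^ (m+1))⁻¹ +
            (∏ i, (t + x i)) * (-((((m:ℝ)+1)) * t ^ m) / (t ^ (m+1))^2) =
          ((t * ∑ i, ∏ j ∈ univ.erase i, (t + x j)) - (((m:ℝ)+1)) * (∏ i, (t + x i))) * t ^ m
            / (t ^ (m+1))^2 := by
        field_simp
        ring
      rw [heq]
      apply div_pos
      · exact mul_pos (by linarith) (pow_pos ht0 m)
      · exact pow_pos (pow_pos ht0 _) 2
  have := hmono (Set.mem_Icc.2 ⟨le_refl _, hlt.le⟩) (Set.mem_Icc.2 ⟨hlt.le, le_refl _⟩) hlt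
  rw [hgP, hgP'] at this
  exact lt_irrefl _ this

lemma key_facts {n : ℕ} (hn : 1 ≤ n) {q : Fin n → ℝ} (hq0 : ∀ i, 0 < q i) (hq1 : ∀ i, q i < 1) :
    (∀ i, q i * ((∏ j, (1 - q j)) + Fm n q i) = Fm n q i) ∧
    (∏ i, ((∏ j, (1 - q j)) + Fm n q i)) = (∏ j, (1 - q j)) ^ (n - 1) := by
  classical
  set P : ℝ := ∏ j, (1 - q j) with hPdef
  have hP : 0 < P := Finset.prod_pos fun j _ => by have := hq1 j; linarith
  have hPi : ∀ i, (1 - q i) * ∏ j ∈ univ.erase i, (1 - q j) = P :=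
    fun i => Finset.mul_prod_erase univ (fun j => 1 - q j) (Finset.mem_univ i)
  have ha : ∀ i, q i * (P + Fm n q i) = Fm n q i := by
    intro i
    unfold Fm
    linear_combination (-(q i)) * hPi i
  refine ⟨ha, ?_⟩
  have h1q : ∀ i, (1 - q i) * (P + Fm n q i) = P := by
    intro i
    linear_combination - ha i
  have hPn : P * ∏ i, (P + Fm n q i) = P ^ n := by
    calc P * ∏ i, (P + Fm n q i) = ∏ i, ((1 - q i) * (P + Fm n q i)) := by
          rw [Finset.prod_mul_distrib]
      _ = ∏ _i : Fin n, P := Finset.prod_congr rfl (fun i _ => h1q i)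
      _ = P ^ n := by rw [Finset.prod_const, card_univ, Fintype.card_fin]
  refine mul_left_cancel₀ hP.ne' ?_
  rw [hPn, ← pow_succ']
  congr 1
  omega

lemma mem_Sopen_lt_one {n : ℕ} {q : Fin n → ℝ} (hq : q ∈ Sopen n) (i : Fin n) :
    q i < 1 := by
  obtain ⟨h0, h1⟩ := hq
  calc q i ≤ ∑ j, q j := Finset.single_le_sum (fun j _ => (h0 j).le) (Finset.mem_univ i)
  _ < 1 := h1

lemma injOn_Fm {n : ℕ} (hn : 2 ≤ n) : Set.InjOn (Fm n) (Sopen n) := by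
  intro q hq q' hq' hF
  have hn1 : 1 ≤ n := by omega
  have hq1 : ∀ i, q i < 1 := mem_Sopen_lt_one hq
  have hq1' : ∀ i, q' i < 1 := mem_Sopen_lt_one hq'
  obtain ⟨ha, hb⟩ := key_facts hn1 hq.1 hq1
  obtain ⟨ha', hb'⟩ := key_facts hn1 hq'.1 hq1'
  rw [hF] at ha hb
  set x : Fin n → ℝ := Fm n q' with hx
  set P : ℝ := ∏ j, (1 - q j) with hP
  set P' : ℝ := ∏ j, (1 - q' j) with hP'
  have hPpos : 0 < P := Finset.prod_pos fun j _ => by have := hq1 j; linarith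
  have hPpos' : 0 < P' := Finset.prod_pos fun j _ => by have := hq1' j; linarith
  have hxpos : ∀ i, 0 < x i := by
    intro i
    rw [hx]
    unfold Fm
    exact mul_pos (hq'.1 i) (Finset.prod_pos fun j _ => by have := hq1' j; linarith)
  have hqeq : ∀ i, q i = x i / (P + x i) := by
    intro i
    have hd : P + x i > 0 := by have := hxpos i; linarith
    rw [eq_div_iff hd.ne']
    exact ha i
  have hqeq' : ∀ i, q' i = x i / (P' + x i) := by
    intro i
    have hd : P' + x i > 0 := by have := hxpos i; linarith
    rw [eq_div_iff hd.ne']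
    exact ha' i
  have hc : ∑ i, x i / (P + x i) < 1 := by
    calc ∑ i, x i / (P + x i) = ∑ i, q i := by
          exact Finset.sum_congr rfl fun i _ => (hqeq i).symm
      _ < 1 := hq.2
  have hc' : ∑ i, x i / (P' + x i) < 1 := by
    calc ∑ i, x i / (P' + x i) = ∑ i, q' i := by
          exact Finset.sum_congr rfl fun i _ => (hqeq' i).symm
      _ < 1 := hq'.2
  have hPP : P = P' := by
    rcases le_total P P' with h | h
    · exact root_unique hn hxpos hPpos h hb hb' hc
    · exact (root_unique hn hxpos hPpos' h hb' hb hc').symm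
  funext i
  rw [hqeq i, hqeq' i, hPP]


noncomputable def Amat (n : ℕ) (q : Fin n → ℝ) : Matrix (Fin n) (Fin n) ℝ :=
  Matrix.of fun i k =>
    if i = k then ∏ j ∈ univ.erase i, (1 - q j)
    else -(q i * ∏ j ∈ (univ.erase i).erase k, (1 - q j))

noncomputable def Fd (n : ℕ) (q : Fin n → ℝ) : (Fin n → ℝ) →L[ℝ] (Fin n → ℝ) :=
  LinearMap.toContinuousLinearMap (Matrix.toLin' (Amat n q))

lemma hasFDerivAt_Fm {n : ℕ} (q : Fin n → ℝ) : HasFDerivAt (Fm n) (Fd n q) q := by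
  rw [hasFDerivAt_pi']
  intro i
  have hprod : HasFDerivAt (fun p : Fin n → ℝ => ∏ j ∈ univ.erase i, (1 - p j))
      (∑ j ∈ univ.erase i, (∏ k ∈ (univ.erase i).erase j, (1 - q k)) •
        (-(ContinuousLinearMap.proj j : (Fin n → ℝ) →L[ℝ] ℝ))) q := by
    apply HasFDerivAt.finset_prod
    intro j _
    have hc : HasFDerivAt (fun _ : Fin n → ℝ => (1:ℝ)) (0 : (Fin n → ℝ) →L[ℝ] ℝ) q :=
      hasFDerivAt_const (1:ℝ) q
    have hp : HasFDerivAt (fun p : Fin n → ℝ => p j)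
        (ContinuousLinearMap.proj j : (Fin n → ℝ) →L[ℝ] ℝ) q :=
      (ContinuousLinearMap.proj j : (Fin n → ℝ) →L[ℝ] ℝ).hasFDerivAt
    have h := hc.sub hp; simp at h; exact h
  have hmul := ((ContinuousLinearMap.proj i :
    (Fin n → ℝ) →L[ℝ] ℝ).hasFDerivAt (x := q)).mul hprod
  have heq : (ContinuousLinearMap.proj i).comp (Fd n q) =
      q i • (∑ j ∈ univ.erase i, (∏ k ∈ (univ.erase i).erase j, (1 - q k)) •
        (-(ContinuousLinearMap.proj j : (Fin n → ℝ) →L[ℝ] ℝ))) +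
      (∏ j ∈ univ.erase i, (1 - q j)) • (ContinuousLinearMap.proj i) := by
    apply ContinuousLinearMap.ext
    intro v
    simp only [ContinuousLinearMap.comp_apply, ContinuousLinearMap.add_apply,
      ContinuousLinearMap.smul_apply, ContinuousLinearMap.sum_apply,
      ContinuousLinearMap.neg_apply, ContinuousLinearMap.proj_apply, smul_eq_mul]
    have hFd : Fd n q v i = ∑ k, Amat n q i k * v k := by
      show Matrix.toLin' (Amat n q) v i = _
      rw [Matrix.toLin'_apply]
      rfl
    rw [hFd]
    rw [← Finset.add_sum_erase univ (fun k => Amat n q i k * v k) (Finset.mem_univ i)]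
    have h1 : Amat n q i i = ∏ j ∈ univ.erase i, (1 - q j) := by
      simp [Amat]
    have h2 : ∀ k ∈ univ.erase i, Amat n q i k * v k =
        -(q i * ∏ j ∈ (univ.erase i).erase k, (1 - q j)) * v k := by
      intro k hk
      have : i ≠ k := fun h => (Finset.ne_of_mem_erase hk) h.symm
      simp [Amat, this]
    rw [h1, Finset.sum_congr rfl h2, Finset.mul_sum]
    ring_nf
  simp only [ContinuousLinearMap.proj_apply] at hmul
  rw [← heq] at hmul
  exact hmul


lemma prod_prod_erase {n : ℕ} (hn : 1 ≤ n) {f : Fin n → ℝ} (hf : ∏ j, f j ≠ 0) :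
    ∏ i, ∏ j ∈ univ.erase i, f j = (∏ j, f j) ^ (n - 1) := by
  have h : ∀ i, ∏ j ∈ univ.erase i, f j = (∏ j, f j) * (f i)⁻¹ := by
    intro i
    have hfi : f i ≠ 0 := fun h0 => hf (Finset.prod_eq_zero (Finset.mem_univ i) h0)
    rw [eq_mul_inv_iff_mul_eq₀ hfi]
    exact Finset.prod_erase_mul univ f (Finset.mem_univ i)
  rw [Finset.prod_congr rfl (fun i _ => h i), Finset.prod_mul_distrib,
    Finset.prod_const, Finset.prod_inv_distrib, card_univ, Fintype.card_fin]
  have h2 : (∏ j, f j) ^ n = (∏ j, f j) ^ (n-1) * (∏ j, f j) := by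
    rw [← pow_succ]; congr 1; omega
  rw [h2, mul_assoc, mul_inv_cancel₀ hf, mul_one]

lemma det_Amat {n : ℕ} (hn : 2 ≤ n) {q : Fin n → ℝ} (h : ∀ j, q j < 1) :
    (Amat n q).det = (∏ i, (1 - q i)) ^ (n - 2) * (1 - ∑ i, q i) := by
  have hne : ∀ j, (1 - q j) ≠ 0 := fun j => by have := h j; intro hc; linarith
  have hfac : Amat n q = (Matrix.diagonal fun i => ∏ j ∈ univ.erase i, (1 - q j)) *
      ((1 + Matrix.replicateCol Unit (fun i => -q i) * Matrix.replicateRow Unit (fun _ => (1:ℝ))) *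
        Matrix.diagonal fun k => (1 - q k)⁻¹) := by
    ext i k
    rw [Matrix.diagonal_mul, Matrix.mul_diagonal, Matrix.add_apply]
    have hcr : (Matrix.replicateCol Unit (fun i => -q i) * Matrix.replicateRow Unit (fun _ => (1:ℝ))) i k
        = -q i := by
      simp [Matrix.mul_apply]
    rw [hcr]
    by_cases hik : i = k
    · subst hik
      rw [Matrix.one_apply_eq]
      simp only [Amat, Matrix.of_apply, eq_self_iff_true, if_true]
      rw [show (1:ℝ) + -q i = 1 - q i by ring, mul_inv_cancel₀ (hne i), mul_one]
    · rw [Matrix.one_apply_ne hik]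
      simp only [Amat, Matrix.of_apply, if_neg hik]
      have hPik : ∏ j ∈ univ.erase i, (1 - q j)
          = (1 - q k) * ∏ j ∈ (univ.erase i).erase k, (1 - q j) :=
        (Finset.mul_prod_erase (univ.erase i) (fun j => 1 - q j)
          (Finset.mem_erase.2 ⟨fun hc => hik hc.symm, Finset.mem_univ k⟩)).symm
      rw [hPik]
      field_simp
      rw [eq_div_iff (hne k)]
      ring
  rw [hfac, Matrix.det_mul, Matrix.det_mul, Matrix.det_diagonal, Matrix.det_diagonal,
    Matrix.det_one_add_replicateCol_mul_replicateRow]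
  have hdot : dotProduct (fun _ : Fin n => (1:ℝ)) (fun i => -q i) = -∑ i, q i := by
    simp [dotProduct]
  rw [hdot]
  have hprodne : (∏ j, (1 - q j)) ≠ 0 := Finset.prod_ne_zero_iff.2 fun j _ => hne j
  have hP : ∏ i, ∏ j ∈ univ.erase i, (1 - q j) = (∏ j, (1 - q j)) ^ (n-1) :=
    prod_prod_erase (by omega) hprodne
  rw [hP, Finset.prod_inv_distrib]
  rw [show n - 1 = (n-2)+1 by omega, pow_succ]
  field_simp
  ring

lemma det_Fd {n : ℕ} (hn : 2 ≤ n) {q : Fin n → ℝ} (h : ∀ j, q j < 1) :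
    (Fd n q).det = (∏ i, (1 - q i)) ^ (n - 2) * (1 - ∑ i, q i) := by
  have h1 : (Fd n q).det = LinearMap.det ((Fd n q : (Fin n → ℝ) →ₗ[ℝ] (Fin n → ℝ))) := rfl
  rw [h1]
  rw [show ((Fd n q : (Fin n → ℝ) →ₗ[ℝ] (Fin n → ℝ))) = Matrix.toLin' (Amat n q) from
    LinearMap.coe_toContinuousLinearMap _]
  rw [LinearMap.det_toLin']
  exact det_Amat hn h



lemma lambda_eq {n : ℕ} :
    {x : Fin n → ℝ | (∀ i, 0 ≤ x i) ∧ ∃ p : Fin n → ℝ, (∀ i, p i ∈ Set.Icc (0:ℝ) 1) ∧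
      ∀ i, x i ≤ p i * ∏ j ∈ univ.erase i, (1 - p j)} = Fm n '' Sfull n := by
  ext x
  simp only [Set.mem_setOf_eq, Set.mem_image]
  constructor
  · rintro ⟨hx0, p, hp, hxp⟩
    obtain ⟨q, hq, hxq⟩ := exists_simplex_witness hx0 hp hxp
    obtain ⟨u, hu, hFu⟩ := exists_eq_of_le hq hx0 hxq
    exact ⟨u, hu, hFu⟩
  · rintro ⟨q, hq, rfl⟩
    have hq1 : ∀ i, q i ≤ 1 := fun i =>
      le_trans (Finset.single_le_sum (fun j _ => hq.1 j) (Finset.mem_univ i)) hq.2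
    refine ⟨fun i => mul_nonneg (hq.1 i)
      (Finset.prod_nonneg fun j _ => by have := hq1 j; linarith), q,
      fun i => ⟨hq.1 i, hq1 i⟩, fun i => le_refl _⟩

section Glue
variable {n : ℕ}

lemma isOpen_Sopen : IsOpen (Sopen n) := by
  have h : Sopen n = (⋂ i, {p : Fin n → ℝ | 0 < p i}) ∩ {p | ∑ i, p i < 1} := by
    ext p; simp [Sopen, Set.mem_iInter]
  rw [h]
  exact (isOpen_iInter_of_finite fun i =>
      isOpen_lt continuous_const (continuous_apply i)).inter
    (isOpen_lt (continuous_finset_sum _ fun i _ => continuous_apply i) continuous_const)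

lemma isClosed_Sfull : IsClosed (Sfull n) := by
  have h : Sfull n = (⋂ i, {p : Fin n → ℝ | 0 ≤ p i}) ∩ {p | ∑ i, p i ≤ 1} := by
    ext p; simp [Sfull, Set.mem_iInter]
  rw [h]
  exact (isClosed_iInter fun i =>
      isClosed_le continuous_const (continuous_apply i)).inter
    (isClosed_le (continuous_finset_sum _ fun i _ => continuous_apply i) continuous_const)

lemma isCompact_Sfull : IsCompact (Sfull n) := by
  apply IsCompact.of_isClosed_subset (isCompact_Icc (a := fun _ : Fin n => (0:ℝ))
    (b := fun _ => (1:ℝ))) isClosed_Sfull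
  intro p hp
  constructor
  · intro i; exact hp.1 i
  · intro i
    calc p i ≤ ∑ j, p j := Finset.single_le_sum (fun j _ => hp.1 j) (Finset.mem_univ i)
      _ ≤ 1 := hp.2

lemma continuous_Fm : Continuous (Fm n) :=
  continuous_pi fun i => (continuous_apply i).mul
    (continuous_finset_prod _ fun j _ => continuous_const.sub (continuous_apply j))

lemma Sopen_subset : Sopen n ⊆ Sfull n := fun p hp => ⟨fun i => (hp.1 i).le, hp.2.le⟩

lemma null_coord (i : Fin n) : volume {p : Fin n → ℝ | p i = 0} = 0 := by
  have h : {p : Fin n → ℝ | p i = 0} =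
      Set.pi Set.univ (fun j => if j = i then ({0} : Set ℝ) else Set.univ) := by
    ext p
    simp only [Set.mem_setOf_eq, Set.mem_pi, Set.mem_univ, true_implies]
    constructor
    · intro hp j
      by_cases hj : j = i
      · subst hj; simp [hp]
      · simp [hj]
    · intro hp
      have := hp i
      simpa using this
  rw [h, volume_pi_pi]
  apply Finset.prod_eq_zero (Finset.mem_univ i)
  simp

lemma null_sum_one (hn : 2 ≤ n) : volume {p : Fin n → ℝ | ∑ i, p i = 1} = 0 := by
  classical
  set L : (Fin n → ℝ) →ₗ[ℝ] ℝ := ∑ i : Fin n, LinearMap.proj i with hL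
  have hLapp : ∀ p : Fin n → ℝ, L p = ∑ i, p i := by
    intro p; simp [hL]
  have hker : LinearMap.ker L ≠ ⊤ := by
    intro h
    have hmem : ((fun _ => (1:ℝ)) : Fin n → ℝ) ∈ LinearMap.ker L := h ▸ Submodule.mem_top
    rw [LinearMap.mem_ker, hLapp] at hmem
    simp at hmem
    omega
  have htrans : {p : Fin n → ℝ | ∑ i, p i = 1} =
      (fun p : Fin n → ℝ => p + (fun _ => -(n:ℝ)⁻¹)) ⁻¹' ((LinearMap.ker L : Submodule ℝ (Fin n → ℝ)) : Set (Fin n → ℝ)) := by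
    ext p
    simp only [Set.mem_setOf_eq, Set.mem_preimage, SetLike.mem_coe, LinearMap.mem_ker, hLapp]
    have hc : ∑ _i : Fin n, (-(n:ℝ)⁻¹) = -1 := by
      rw [Finset.sum_const, card_univ, Fintype.card_fin, nsmul_eq_mul]
      have hn0 : (n:ℝ) ≠ 0 := by
        simp only [ne_eq, Nat.cast_eq_zero]
        omega
      field_simp
    have hsum : ∑ i, (p + (fun _ => -(n:ℝ)⁻¹) : Fin n → ℝ) i = (∑ i, p i) - 1 := by
      simp only [Pi.add_apply]
      rw [Finset.sum_add_distrib, hc]; ring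
    rw [hsum]
    constructor <;> intro h <;> linarith
  rw [htrans]
  rw [measure_preimage_add_right]
  exact Measure.addHaar_submodule volume (LinearMap.ker L) hker

end Glue

theorem main (n : ℕ) (hn : 2 ≤ n) :
    (volume {x : Fin n → ℝ | (∀ i, 0 ≤ x i) ∧ ∃ p : Fin n → ℝ,
        (∀ i, p i ∈ Set.Icc (0:ℝ) 1) ∧
        ∀ i, x i ≤ p i * ∏ j ∈ univ.erase i, (1 - p j)}).toReal =
      ∫ p in {p : Fin n → ℝ | (∀ i, 0 ≤ p i) ∧ ∑ i, p i ≤ 1},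
        (∏ i, (1 - p i)) ^ (n - 2) * (1 - ∑ i, p i) := by
  classical
  set g : (Fin n → ℝ) → ℝ := fun p => (∏ i, (1 - p i)) ^ (n - 2) * (1 - ∑ i, p i) with hg
  have hSS : {p : Fin n → ℝ | (∀ i, 0 ≤ p i) ∧ ∑ i, p i ≤ 1} = Sfull n := rfl
  rw [lambda_eq, hSS]
  have hsub : Sopen n ⊆ Sfull n := Sopen_subset
  have hS'meas : MeasurableSet (Sopen n) := isOpen_Sopen.measurableSet
  have hSmeas : MeasurableSet (Sfull n) := isClosed_Sfull.measurableSet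
  have hnull : volume (Sfull n \ Sopen n) = 0 := by
    have hsub2 : Sfull n \ Sopen n ⊆
        (⋃ i, {p : Fin n → ℝ | p i = 0}) ∪ {p : Fin n → ℝ | ∑ i, p i = 1} := by
      rintro p ⟨hp, hp'⟩
      simp only [Sopen, Set.mem_setOf_eq, not_and_or, not_forall, not_lt] at hp'
      rcases hp' with h | h
      · obtain ⟨i, hi⟩ := h
        exact Or.inl (Set.mem_iUnion.2 ⟨i, le_antisymm hi (hp.1 i)⟩)
      · exact Or.inr (le_antisymm hp.2 h)
    refine measure_mono_null hsub2 ?_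
    rw [measure_union_null_iff]
    exact ⟨measure_iUnion_null fun i => null_coord i, null_sum_one hn⟩
  have hderiv : ∀ s : Set (Fin n → ℝ), ∀ x ∈ s,
      HasFDerivWithinAt (Fm n) (Fd n x) s x :=
    fun s x _ => (hasFDerivAt_Fm x).hasFDerivWithinAt
  have himgnull : volume (Fm n '' (Sfull n \ Sopen n)) = 0 := by
    refine le_antisymm ?_ zero_le
    calc volume (Fm n '' (Sfull n \ Sopen n))
        ≤ ∫⁻ x in Sfull n \ Sopen n, ENNReal.ofReal |(Fd n x).det| :=
          addHaar_image_le_lintegral_abs_det_fderiv volume (hSmeas.diff hS'meas)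
            (hderiv _)
      _ = 0 := by rw [Measure.restrict_eq_zero.2 hnull, lintegral_zero_measure]
  have himg : volume (Fm n '' Sfull n) = volume (Fm n '' Sopen n) := by
    apply le_antisymm
    · calc volume (Fm n '' Sfull n)
          = volume (Fm n '' (Sopen n ∪ (Sfull n \ Sopen n))) := by
            rw [Set.union_diff_cancel hsub]
        _ ≤ volume (Fm n '' Sopen n) + volume (Fm n '' (Sfull n \ Sopen n)) := by
            rw [Set.image_union]; exact measure_union_le _ _
        _ = volume (Fm n '' Sopen n) := by rw [himgnull, add_zero]
    · exact measure_mono (Set.image_mono hsub)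
  have hcov : volume (Fm n '' Sopen n) = ∫⁻ x in Sopen n, ENNReal.ofReal |(Fd n x).det| :=
    (lintegral_abs_det_fderiv_eq_addHaar_image volume hS'meas (hderiv _) (injOn_Fm hn)).symm
  have hgnonneg : ∀ x ∈ Sopen n, 0 ≤ g x := by
    intro x hx
    have h1 : ∀ j, x j < 1 := mem_Sopen_lt_one hx
    apply mul_nonneg
    · apply pow_nonneg
      exact Finset.prod_nonneg fun j _ => by have := h1 j; linarith
    · have := hx.2; linarith
  have hinteq : ∫⁻ x in Sopen n, ENNReal.ofReal |(Fd n x).det|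
      = ∫⁻ x in Sopen n, ENNReal.ofReal (g x) := by
    apply setLIntegral_congr_fun hS'meas
    intro x hx
    dsimp only
    rw [det_Fd hn (mem_Sopen_lt_one hx), abs_of_nonneg (hgnonneg x hx)]
  have hgcont : Continuous g := by
    apply Continuous.mul
    · exact (continuous_finset_prod _ fun j _ => continuous_const.sub (continuous_apply j)).pow _
    · exact continuous_const.sub (continuous_finset_sum _ fun i _ => continuous_apply i)
  have hint : IntegrableOn g (Sopen n) volume :=
    (hgcont.continuousOn.integrableOn_compact isCompact_Sfull).mono_set hsub
  have hofreal : ENNReal.ofReal (∫ x in Sopen n, g x)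
      = ∫⁻ x in Sopen n, ENNReal.ofReal (g x) :=
    ofReal_integral_eq_lintegral_ofReal hint
      ((ae_restrict_iff' hS'meas).2 (ae_of_all _ fun x hx => hgnonneg x hx))
  have hae : (Sopen n : Set (Fin n → ℝ)) =ᵐ[volume] Sfull n := by
    rw [MeasureTheory.ae_eq_set]
    constructor
    · rw [Set.diff_eq_empty.2 hsub]; exact measure_empty
    · exact hnull
  rw [himg, hcov, hinteq, ← hofreal, ENNReal.toReal_ofReal
    (setIntegral_nonneg hS'meas hgnonneg), setIntegral_congr_set hae]


end Stmt1Aux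

open Finset MeasureTheory

theorem stmt_1 (n : ℕ) (hn : 2 ≤ n) :
    (volume {x : Fin n → ℝ | (∀ i, 0 ≤ x i) ∧ ∃ p : Fin n → ℝ,
        (∀ i, p i ∈ Set.Icc (0:ℝ) 1) ∧
        ∀ i, x i ≤ p i * ∏ j ∈ univ.erase i, (1 - p j)}).toReal =
      ∫ p in {p : Fin n → ℝ | (∀ i, 0 ≤ p i) ∧ ∑ i, p i ≤ 1},
        (∏ i, (1 - p i)) ^ (n - 2) * (1 - ∑ i, p i) :=
  Stmt1Aux.main n hn
end

section
/- For every integer n ≥ 2, the map φ : ℝ^n → ℝ^n defined by φ(p)_i = p_i ∏_{j≠i}(1−p_j) for i ∈ [n] restricts to a bijection from the simplex S = {p ∈ ℝ^n : p_i ≥ 0 for all i, Σ_{i=1}^n p_i ≤ 1} onto the set Λ. -/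
open Finset

noncomputable def Lx (n : ℕ) (x : Fin n → ℝ) (P : ℝ) : ℝ :=
  (∑ i, Real.log (P + x i)) - ((n:ℝ) - 1) * Real.log P

noncomputable def Gx (n : ℕ) (x : Fin n → ℝ) (P : ℝ) : ℝ := ∑ i, x i / (P + x i)

lemma hasDerivAt_Lx (n : ℕ) (x : Fin n → ℝ) (hx : ∀ i, 0 ≤ x i) {P : ℝ} (hP : 0 < P) :
    HasDerivAt (Lx n x) ((1 - Gx n x P) / P) P := by
  have hpx : ∀ i : Fin n, 0 < P + x i := fun i => by have := hx i; linarith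
  have h1 : ∀ i : Fin n, HasDerivAt (fun P : ℝ => Real.log (P + x i)) (1/(P + x i)) P := by
    intro i
    have h := (Real.hasDerivAt_log (hpx i).ne').comp P
      ((hasDerivAt_id P).add_const (x i))
    simpa [one_div, Function.comp_def] using h
  have hsum : HasDerivAt (fun P : ℝ => ∑ i, Real.log (P + x i)) (∑ i : Fin n, 1/(P+x i)) P :=
    HasDerivAt.fun_sum (fun i _ => h1 i)
  have hlog : HasDerivAt (fun P : ℝ => ((n:ℝ)-1) * Real.log P) (((n:ℝ)-1) * (1/P)) P :=
    by simpa [one_div] using (Real.hasDerivAt_log hP.ne').const_mul ((n:ℝ)-1)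
  have h := hsum.sub hlog
  have key : (1 - Gx n x P) / P = (∑ i : Fin n, 1/(P+x i)) - ((n:ℝ)-1) * (1/P) := by
    have hterm : ∀ i : Fin n, x i/(P+x i) = 1 - P*(1/(P+x i)) := fun i => by
      rw [mul_one_div, eq_sub_iff_add_eq, ← add_div, add_comm]
      exact div_self (hpx i).ne'
    have hGs : Gx n x P = (n:ℝ) - P * ∑ i : Fin n, 1/(P+x i) := by
      rw [Gx, Finset.sum_congr rfl (fun i _ => hterm i), Finset.sum_sub_distrib,
        Finset.sum_const, Finset.card_univ, Fintype.card_fin, nsmul_eq_mul, mul_one,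
        Finset.mul_sum]
    rw [hGs]
    field_simp
    ring
  unfold Lx
  exact key ▸ h

lemma contOn_Lx (n : ℕ) (x : Fin n → ℝ) (hx : ∀ i, 0 ≤ x i) {a b : ℝ} (ha : 0 < a) :
    ContinuousOn (Lx n x) (Set.Icc a b) := fun P hP =>
  (hasDerivAt_Lx n x hx (lt_of_lt_of_le ha hP.1)).continuousAt.continuousWithinAt

lemma Lx_le_zero_iff (n : ℕ) (x : Fin n → ℝ) (hx : ∀ i, 0 ≤ x i) (hn1 : 1 ≤ n) {P : ℝ}
    (hP : 0 < P) : Lx n x P ≤ 0 ↔ ∏ i, (P + x i) ≤ P ^ (n - 1) := by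
  have hpx : ∀ i : Fin n, 0 < P + x i := fun i => by have := hx i; linarith
  have e1 : (∑ i, Real.log (P + x i)) = Real.log (∏ i, (P + x i)) :=
    (Real.log_prod fun i _ => (hpx i).ne').symm
  have e2 : ((n:ℝ) - 1) * Real.log P = Real.log (P ^ (n - 1)) := by
    rw [Real.log_pow, Nat.cast_sub hn1, Nat.cast_one]
  have hprod : 0 < ∏ i, (P + x i) := Finset.prod_pos fun i _ => hpx i
  have hpow : 0 < P ^ (n - 1) := pow_pos hP _
  rw [Lx, e1, e2, sub_nonpos, Real.log_le_log_iff hprod hpow]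

lemma Lx_eq_zero_iff (n : ℕ) (x : Fin n → ℝ) (hx : ∀ i, 0 ≤ x i) (hn1 : 1 ≤ n) {P : ℝ}
    (hP : 0 < P) : Lx n x P = 0 ↔ ∏ i, (P + x i) = P ^ (n - 1) := by
  have hpx : ∀ i : Fin n, 0 < P + x i := fun i => by have := hx i; linarith
  have e1 : (∑ i, Real.log (P + x i)) = Real.log (∏ i, (P + x i)) :=
    (Real.log_prod fun i _ => (hpx i).ne').symm
  have e2 : ((n:ℝ) - 1) * Real.log P = Real.log (P ^ (n - 1)) := by
    rw [Real.log_pow, Nat.cast_sub hn1, Nat.cast_one]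
  have hprod : 0 < ∏ i, (P + x i) := Finset.prod_pos fun i _ => hpx i
  have hpow : 0 < P ^ (n - 1) := pow_pos hP _
  rw [Lx, e1, e2, sub_eq_zero]
  exact ⟨fun h => Real.log_injOn_pos (Set.mem_Ioi.2 hprod) (Set.mem_Ioi.2 hpow) h,
    fun h => by rw [h]⟩

lemma Lx_one_nonneg (n : ℕ) (x : Fin n → ℝ) (hx : ∀ i, 0 ≤ x i) : 0 ≤ Lx n x 1 := by
  rw [Lx, Real.log_one, mul_zero, sub_zero]
  exact Finset.sum_nonneg fun i _ => Real.log_nonneg (by have := hx i; linarith)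

lemma Gx_anti (n : ℕ) (x : Fin n → ℝ) (hx : ∀ i, 0 ≤ x i) {a b : ℝ} (ha : 0 < a)
    (hab : a ≤ b) : Gx n x b ≤ Gx n x a := by
  refine Finset.sum_le_sum fun i _ => ?_
  have h1 : 0 < a + x i := by have := hx i; linarith
  gcongr
  exact hx i

lemma Gx_strictAnti (n : ℕ) (x : Fin n → ℝ) (hx : ∀ i, 0 ≤ x i) (hxne : ∃ i, 0 < x i)
    {a b : ℝ} (ha : 0 < a) (hab : a < b) : Gx n x b < Gx n x a := by
  obtain ⟨i0, hi0⟩ := hxne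
  refine Finset.sum_lt_sum (fun i _ => ?_) ⟨i0, Finset.mem_univ i0, ?_⟩
  · have h1 : 0 < a + x i := by have := hx i; linarith
    gcongr
    exact hx i
  · have h1 : 0 < a + x i0 := by linarith
    exact div_lt_div_of_pos_left hi0 h1 (by linarith)

lemma contOn_Gx (n : ℕ) (x : Fin n → ℝ) (hx : ∀ i, 0 ≤ x i) {a b : ℝ} (ha : 0 < a) :
    ContinuousOn (Gx n x) (Set.Icc a b) := by
  apply continuousOn_finset_sum
  intro i _
  refine ContinuousOn.div continuousOn_const (continuousOn_id.add continuousOn_const) ?_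
  intro P hP
  have := hx i
  have := hP.1
  intro h0
  nlinarith

lemma Lx_strictMonoOn (n : ℕ) (x : Fin n → ℝ) (hx : ∀ i, 0 ≤ x i) {a b : ℝ} (ha : 0 < a)
    (hab : a < b) (hG : ∀ P ∈ Set.Ioo a b, Gx n x P < 1) :
    StrictMonoOn (Lx n x) (Set.Icc a b) := by
  apply strictMonoOn_of_deriv_pos (convex_Icc a b) (contOn_Lx n x hx ha)
  intro P hP
  rw [interior_Icc] at hP
  have hPpos : 0 < P := lt_trans ha hP.1
  rw [(hasDerivAt_Lx n x hx hPpos).deriv]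
  have h1 : 0 < 1 - Gx n x P := by have := hG P hP; linarith
  positivity

lemma Lx_strictAntiOn (n : ℕ) (x : Fin n → ℝ) (hx : ∀ i, 0 ≤ x i) {a b : ℝ} (ha : 0 < a)
    (hab : a < b) (hG : ∀ P ∈ Set.Ioo a b, 1 < Gx n x P) :
    StrictAntiOn (Lx n x) (Set.Icc a b) := by
  apply strictAntiOn_of_deriv_neg (convex_Icc a b) (contOn_Lx n x hx ha)
  intro P hP
  rw [interior_Icc] at hP
  have hPpos : 0 < P := lt_trans ha hP.1
  rw [(hasDerivAt_Lx n x hx hPpos).deriv]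
  have h1 : 1 - Gx n x P < 0 := by have := hG P hP; linarith
  exact div_neg_of_neg_of_pos h1 hPpos

lemma construct (n : ℕ) (hn1 : 1 ≤ n) (x : Fin n → ℝ) (hx : ∀ i, 0 ≤ x i) {P : ℝ}
    (hP : 0 < P) (hprod : ∏ i, (P + x i) = P ^ (n - 1)) :
    ∀ i, (x i / (P + x i)) * ∏ j ∈ univ.erase i, (1 - x j / (P + x j)) = x i := by
  have hpx : ∀ i : Fin n, 0 < P + x i := fun i => by have := hx i; linarith
  intro i
  have h1 : ∀ j : Fin n, 1 - x j / (P + x j) = P / (P + x j) := by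
    intro j
    rw [eq_div_iff (hpx j).ne', sub_mul, div_mul_cancel₀ _ (hpx j).ne']
    ring
  rw [Finset.prod_congr rfl (fun j _ => h1 j), Finset.prod_div_distrib, Finset.prod_const,
    Finset.card_erase_of_mem (Finset.mem_univ i), Finset.card_univ, Fintype.card_fin]
  have hpe : ∏ j ∈ univ.erase i, (P + x j) = P ^ (n - 1) / (P + x i) := by
    rw [eq_div_iff (hpx i).ne', ← hprod, mul_comm]
    exact Finset.mul_prod_erase univ (fun j => P + x j) (Finset.mem_univ i)
  rw [hpe, div_div_eq_mul_div, mul_comm (P ^ (n-1)) (P + x i), mul_div_assoc,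
    div_self (pow_pos hP _).ne', mul_one, div_mul_cancel₀ _ (hpx i).ne']

lemma represent (n : ℕ) (hn1 : 1 ≤ n) (p : Fin n → ℝ) (hp0 : ∀ i, 0 ≤ p i)
    (hp1 : ∀ i, p i < 1) :
    0 < ∏ j, (1 - p j) ∧
    (∀ i, (∏ j, (1 - p j)) + p i * ∏ j ∈ univ.erase i, (1 - p j)
        = ∏ j ∈ univ.erase i, (1 - p j)) ∧
    (∏ i, ((∏ j, (1 - p j)) + p i * ∏ j ∈ univ.erase i, (1 - p j))
        = (∏ j, (1 - p j)) ^ (n - 1)) ∧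
    (∀ i, p i = (p i * ∏ j ∈ univ.erase i, (1 - p j))
        / ((∏ j, (1 - p j)) + p i * ∏ j ∈ univ.erase i, (1 - p j))) := by
  have hQ : ∀ i : Fin n, 0 < ∏ j ∈ univ.erase i, (1 - p j) :=
    fun i => Finset.prod_pos fun j _ => by have := hp1 j; linarith
  have hPpos : 0 < ∏ j, (1 - p j) := Finset.prod_pos fun j _ => by have := hp1 j; linarith
  have hsplit : ∀ i : Fin n, ∏ j, (1 - p j)
      = (1 - p i) * ∏ j ∈ univ.erase i, (1 - p j) :=
    fun i => (Finset.mul_prod_erase univ _ (Finset.mem_univ i)).symm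
  have key : ∀ i : Fin n, (∏ j, (1 - p j)) + p i * ∏ j ∈ univ.erase i, (1 - p j)
      = ∏ j ∈ univ.erase i, (1 - p j) := by
    intro i
    rw [hsplit i]; ring
  refine ⟨hPpos, key, ?_, ?_⟩
  · rw [Finset.prod_congr rfl (fun i _ => key i)]
    have h2 : ∀ i : Fin n, ∏ j ∈ univ.erase i, (1 - p j)
        = (∏ j, (1 - p j)) / (1 - p i) := by
      intro i
      rw [eq_div_iff (by have := hp1 i; linarith : (1:ℝ) - p i ≠ 0), mul_comm]
      exact (hsplit i).symm
    rw [Finset.prod_congr rfl (fun i _ => h2 i), Finset.prod_div_distrib, Finset.prod_const,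
      Finset.card_univ, Fintype.card_fin]
    have hpow : (∏ j, (1 - p j)) ^ n = (∏ j, (1 - p j)) ^ (n-1) * ∏ j, (1 - p j) := by
      rw [← pow_succ]
      congr 1
      omega
    rw [hpow, mul_div_assoc, div_self hPpos.ne', mul_one]
  · intro i
    rw [key i, mul_div_assoc, div_self (hQ i).ne', mul_one]

lemma uniq_root (n : ℕ) (x : Fin n → ℝ) (hx : ∀ i, 0 ≤ x i) (hxne : ∃ i, 0 < x i)
    {a b : ℝ} (ha : 0 < a) (hab : a < b) (hLa : Lx n x a = 0) (hLb : Lx n x b = 0)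
    (hGa : Gx n x a ≤ 1) : False := by
  have hmono := Lx_strictMonoOn n x hx ha hab (fun P hP =>
    lt_of_lt_of_le (Gx_strictAnti n x hx hxne ha hP.1) hGa)
  have := hmono (Set.left_mem_Icc.2 hab.le) (Set.right_mem_Icc.2 hab.le) hab
  rw [hLa, hLb] at this
  exact lt_irrefl 0 this

lemma uniq (n : ℕ) (x : Fin n → ℝ) (hx : ∀ i, 0 ≤ x i) (hxne : ∃ i, 0 < x i)
    {a b : ℝ} (ha : 0 < a) (hb : 0 < b) (hLa : Lx n x a = 0) (hLb : Lx n x b = 0)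
    (hGa : Gx n x a ≤ 1) (hGb : Gx n x b ≤ 1) : a = b := by
  rcases lt_trichotomy a b with h | h | h
  · exact (uniq_root n x hx hxne ha h hLa hLb hGa).elim
  · exact h
  · exact (uniq_root n x hx hxne hb h hLb hLa hGb).elim

theorem stmt_2 (n : ℕ) (hn : 2 ≤ n) :
    Set.BijOn (fun (p : Fin n → ℝ) (i : Fin n) => p i * ∏ j ∈ univ.erase i, (1 - p j))
      {p : Fin n → ℝ | (∀ i, 0 ≤ p i) ∧ ∑ i, p i ≤ 1}
      {x : Fin n → ℝ | (∀ i, 0 ≤ x i) ∧ ∃ p : Fin n → ℝ,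
        (∀ i, p i ∈ Set.Icc (0:ℝ) 1) ∧
        ∀ i, x i ≤ p i * ∏ j ∈ univ.erase i, (1 - p j)} := by
  have hn1 : 1 ≤ n := le_trans one_le_two hn
  have hle1 : ∀ r : Fin n → ℝ, (∀ i, 0 ≤ r i) → (∑ i, r i ≤ 1) → ∀ i, r i ≤ 1 :=
    fun r h0 hs i => le_trans (Finset.single_le_sum (fun j _ => h0 j) (Finset.mem_univ i)) hs
  have hzero : ∀ r : Fin n → ℝ, (∀ i, 0 ≤ r i) → (∑ i, r i ≤ 1) →
      ∀ i k, r i = 1 → k ≠ i → r k = 0 := by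
    intro r h0 hs i k h1 hki
    have hsub : r i + r k ≤ ∑ j, r j := by
      have := Finset.sum_le_sum_of_subset_of_nonneg (Finset.subset_univ {i, k})
        (fun j _ _ => h0 j)
      rwa [Finset.sum_pair (Ne.symm hki)] at this
    have := h0 k
    linarith
  have hone : ∀ r : Fin n → ℝ, (∀ i, 0 ≤ r i) → (∑ i, r i ≤ 1) →
      ∀ i, r i * ∏ j ∈ univ.erase i, (1 - r j) = 1 → r i = 1 := by
    intro r h0 hs i h
    have hb0 : 0 ≤ ∏ j ∈ univ.erase i, (1 - r j) :=
      Finset.prod_nonneg fun j _ => by have := hle1 r h0 hs j; linarith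
    have hb1 : ∏ j ∈ univ.erase i, (1 - r j) ≤ 1 :=
      Finset.prod_le_one (fun j _ => by have := hle1 r h0 hs j; linarith)
        (fun j _ => by have := h0 j; linarith)
    have hi1 := hle1 r h0 hs i
    have h2 : 1 ≤ r i := by nlinarith [h0 i]
    linarith
  have hphi1 : ∀ r : Fin n → ℝ, (∀ i, 0 ≤ r i) → (∑ i, r i ≤ 1) →
      ∀ i, r i = 1 → r i * ∏ j ∈ univ.erase i, (1 - r j) = 1 := by
    intro r h0 hs i h1
    rw [h1, one_mul]
    exact Finset.prod_eq_one fun j hj => by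
      rw [hzero r h0 hs i j h1 (Finset.mem_erase.1 hj).1, sub_zero]
  refine ⟨?_, ?_, ?_⟩
  · -- MapsTo
    intro p hp
    obtain ⟨hp0, hps⟩ := hp
    exact ⟨fun i => mul_nonneg (hp0 i) (Finset.prod_nonneg fun j _ => by
        have := hle1 p hp0 hps j; linarith),
      p, fun i => ⟨hp0 i, hle1 p hp0 hps i⟩, fun i => le_rfl⟩
  · -- InjOn
    intro p hp q hq heq
    obtain ⟨hp0, hps⟩ := hp
    obtain ⟨hq0, hqs⟩ := hq
    have hx : ∀ i, p i * ∏ j ∈ univ.erase i, (1 - p j)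
        = q i * ∏ j ∈ univ.erase i, (1 - q j) := fun i => congrFun heq i
    by_cases hp1 : ∃ i, p i = 1
    · obtain ⟨i, hpi⟩ := hp1
      have hqi : q i = 1 := hone q hq0 hqs i (by rw [← hx i]; exact hphi1 p hp0 hps i hpi)
      funext k
      rcases eq_or_ne k i with rfl | hk
      · rw [hpi, hqi]
      · rw [hzero p hp0 hps i k hpi hk, hzero q hq0 hqs i k hqi hk]
    · by_cases hq1 : ∃ i, q i = 1
      · obtain ⟨i, hqi⟩ := hq1
        exact absurd ⟨i, hone p hp0 hps i (by rw [hx i]; exact hphi1 q hq0 hqs i hqi)⟩ hp1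
      · push_neg at hp1 hq1
        have hplt : ∀ i, p i < 1 := fun i => lt_of_le_of_ne (hle1 p hp0 hps i) (hp1 i)
        have hqlt : ∀ i, q i < 1 := fun i => lt_of_le_of_ne (hle1 q hq0 hqs i) (hq1 i)
        obtain ⟨hPp, hkeyp, hprodp, hrepp⟩ := represent n hn1 p hp0 hplt
        obtain ⟨hPq, hkeyq, hprodq, hrepq⟩ := represent n hn1 q hq0 hqlt
        have hx0 : ∀ i, 0 ≤ p i * ∏ j ∈ univ.erase i, (1 - p j) :=
          fun i => mul_nonneg (hp0 i) (Finset.prod_nonneg fun j _ => by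
            have := hplt j; linarith)
        have hprodq' : ∏ i, ((∏ j, (1 - q j)) + p i * ∏ j ∈ univ.erase i, (1 - p j))
            = (∏ j, (1 - q j)) ^ (n - 1) := by
          rw [Finset.prod_congr rfl (fun i _ => by rw [hx i])]
          exact hprodq
        have hLa : Lx n (fun i => p i * ∏ j ∈ univ.erase i, (1 - p j)) (∏ j, (1 - p j)) = 0 :=
          (Lx_eq_zero_iff n _ hx0 hn1 hPp).2 hprodp
        have hLb : Lx n (fun i => p i * ∏ j ∈ univ.erase i, (1 - p j)) (∏ j, (1 - q j)) = 0 :=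
          (Lx_eq_zero_iff n _ hx0 hn1 hPq).2 hprodq'
        have hGa : Gx n (fun i => p i * ∏ j ∈ univ.erase i, (1 - p j)) (∏ j, (1 - p j)) ≤ 1 := by
          have : Gx n (fun i => p i * ∏ j ∈ univ.erase i, (1 - p j)) (∏ j, (1 - p j))
              = ∑ i, p i := by
            rw [Gx]
            exact Finset.sum_congr rfl fun i _ => (hrepp i).symm
          rw [this]; exact hps
        have hGb : Gx n (fun i => p i * ∏ j ∈ univ.erase i, (1 - p j)) (∏ j, (1 - q j)) ≤ 1 := by
          have : Gx n (fun i => p i * ∏ j ∈ univ.erase i, (1 - p j)) (∏ j, (1 - q j))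
              = ∑ i, q i := by
            rw [Gx]
            refine Finset.sum_congr rfl fun i _ => ?_
            rw [hx i]
            exact (hrepq i).symm
          rw [this]; exact hqs
        by_cases hxz : ∃ i, 0 < p i * ∏ j ∈ univ.erase i, (1 - p j)
        · have hab : (∏ j, (1 - p j)) = ∏ j, (1 - q j) :=
            uniq n _ hx0 hxz hPp hPq hLa hLb hGa hGb
          funext i
          rw [hrepp i, hrepq i, ← hx i, ← hab]
        · push_neg at hxz
          funext i
          have hzi : p i * ∏ j ∈ univ.erase i, (1 - p j) = 0 :=
            le_antisymm (hxz i) (hx0 i)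
          rw [hrepp i, hrepq i, ← hx i, hzi]
          simp
  · -- SurjOn
    intro x hxmem
    obtain ⟨hx0, p, hpIcc, hxle⟩ := hxmem
    by_cases hxz : ∀ i, x i = 0
    · refine ⟨fun _ => 0, ⟨fun i => le_rfl, by simp⟩, funext fun i => ?_⟩
      simp [hxz i]
    · push_neg at hxz
      obtain ⟨i0, hi0⟩ := hxz
      have hi0pos : 0 < x i0 := lt_of_le_of_ne (hx0 i0) (Ne.symm hi0)
      by_cases hP0 : ∏ j, (1 - p j) = 0
      · -- some p j = 1
        obtain ⟨j, _, hj⟩ := Finset.prod_eq_zero_iff.1 hP0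
        have hxi : ∀ i, i ≠ j → x i = 0 := by
          intro i hij
          have hjm : j ∈ univ.erase i := Finset.mem_erase.2 ⟨fun h => hij h.symm, Finset.mem_univ j⟩
          have hQ0 : ∏ k ∈ univ.erase i, (1 - p k) = 0 := Finset.prod_eq_zero hjm hj
          have := hxle i
          rw [hQ0, mul_zero] at this
          exact le_antisymm this (hx0 i)
        have hxj1 : x j ≤ 1 := by
          refine le_trans (hxle j) (mul_le_one₀ (hpIcc j).2 ?_ ?_)
          · exact Finset.prod_nonneg fun k _ => by have := (hpIcc k).2; linarith
          · exact Finset.prod_le_one (fun k _ => by have := (hpIcc k).2; linarith)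
              (fun k _ => by have := (hpIcc k).1; linarith)
        refine ⟨x, ⟨hx0, ?_⟩, funext fun i => ?_⟩
        · rw [Finset.sum_eq_single j (fun i _ hij => hxi i hij)
            (fun h => absurd (Finset.mem_univ j) h)]
          exact hxj1
        · show x i * ∏ k ∈ univ.erase i, (1 - x k) = x i
          rcases eq_or_ne i j with rfl | hij
          · rw [Finset.prod_eq_one fun k hk => by
              rw [hxi k (Finset.mem_erase.1 hk).1, sub_zero], mul_one]
          · rw [hxi i hij, zero_mul]
      · -- main case
        have hP0nn : 0 ≤ ∏ j, (1 - p j) :=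
          Finset.prod_nonneg fun j _ => by have := (hpIcc j).2; linarith
        have hP0pos : 0 < ∏ j, (1 - p j) := lt_of_le_of_ne hP0nn (Ne.symm hP0)
        have hplt : ∀ i, p i < 1 := by
          intro i
          have := Finset.prod_ne_zero_iff.1 hP0 i (Finset.mem_univ i)
          have := (hpIcc i).2
          rcases lt_or_eq_of_le ‹p i ≤ 1› with h | h
          · exact h
          · exact absurd (by rw [h]; ring) ‹(1 : ℝ) - p i ≠ 0›
        have hp0' : ∀ i, 0 ≤ p i := fun i => (hpIcc i).1
        obtain ⟨_, hkeyp, hprodp, _⟩ := represent n hn1 p hp0' hplt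
        have hkey : ∀ i, (∏ j, (1 - p j)) + x i ≤ ∏ j ∈ univ.erase i, (1 - p j) := by
          intro i
          have := hkeyp i
          have := hxle i
          linarith
        have hQle1 : ∀ i, ∏ j ∈ univ.erase i, (1 - p j) ≤ 1 := fun i =>
          Finset.prod_le_one (fun k _ => by have := (hpIcc k).2; linarith)
            (fun k _ => by have := (hpIcc k).1; linarith)
        have hP0lt : ∏ j, (1 - p j) < 1 := by
          have h1 := hkey i0
          have h2 := hQle1 i0
          linarith
        have hprodle : ∏ i, ((∏ j, (1 - p j)) + x i) ≤ (∏ j, (1 - p j)) ^ (n - 1) := by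
          calc ∏ i, ((∏ j, (1 - p j)) + x i)
              ≤ ∏ i, ∏ j ∈ univ.erase i, (1 - p j) :=
                Finset.prod_le_prod (fun i _ => by have := hx0 i; positivity)
                  (fun i _ => hkey i)
            _ = ∏ i, ((∏ j, (1 - p j)) + p i * ∏ j ∈ univ.erase i, (1 - p j)) :=
                (Finset.prod_congr rfl fun i _ => (hkeyp i).symm)
            _ = (∏ j, (1 - p j)) ^ (n - 1) := hprodp
        have hLP0 : Lx n x (∏ j, (1 - p j)) ≤ 0 :=
          (Lx_le_zero_iff n x hx0 hn1 hP0pos).2 hprodle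
        have hL1 : 0 ≤ Lx n x 1 := Lx_one_nonneg n x hx0
        by_cases hGP0 : Gx n x (∏ j, (1 - p j)) ≤ 1
        · obtain ⟨P, hPmem, hLP⟩ := intermediate_value_Icc hP0lt.le
            (contOn_Lx n x hx0 hP0pos) ⟨hLP0, hL1⟩
          have hPpos : 0 < P := lt_of_lt_of_le hP0pos hPmem.1
          have hGP : Gx n x P ≤ 1 := le_trans (Gx_anti n x hx0 hP0pos hPmem.1) hGP0
          refine ⟨fun i => x i / (P + x i), ⟨fun i => div_nonneg (hx0 i)
            (by have := hx0 i; linarith), hGP⟩, funext fun i => ?_⟩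
          exact construct n hn1 x hx0 hPpos ((Lx_eq_zero_iff n x hx0 hn1 hPpos).1 hLP) i
        · push_neg at hGP0
          have hG1 : Gx n x 1 < 1 := by
            by_contra h
            push_neg at h
            have hanti := Lx_strictAntiOn n x hx0 hP0pos hP0lt (fun P hP =>
              lt_of_le_of_lt h (Gx_strictAnti n x hx0 ⟨i0, hi0pos⟩
                (lt_trans hP0pos hP.1) hP.2))
            have := hanti (Set.left_mem_Icc.2 hP0lt.le) (Set.right_mem_Icc.2 hP0lt.le) hP0lt
            linarith
          obtain ⟨Pb, hPbmem, hGPb⟩ := intermediate_value_Icc' hP0lt.le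
            (contOn_Gx n x hx0 hP0pos) ⟨hG1.le, hGP0.le⟩
          have hPbpos : 0 < Pb := lt_of_lt_of_le hP0pos hPbmem.1
          have hPblt : ∏ j, (1 - p j) < Pb := by
            rcases lt_or_eq_of_le hPbmem.1 with h | h
            · exact h
            · rw [← h] at hGPb; linarith
          have hLPb : Lx n x Pb < 0 := by
            have hanti := Lx_strictAntiOn n x hx0 hP0pos hPblt (fun P hP => by
              have := Gx_strictAnti n x hx0 ⟨i0, hi0pos⟩ (lt_trans hP0pos hP.1) hP.2
              rw [hGPb] at this
              linarith)
            have := hanti (Set.left_mem_Icc.2 hPblt.le) (Set.right_mem_Icc.2 hPblt.le) hPblt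
            linarith
          obtain ⟨P, hPmem, hLP⟩ := intermediate_value_Icc hPbmem.2
            (contOn_Lx n x hx0 hPbpos) ⟨hLPb.le, hL1⟩
          have hPpos : 0 < P := lt_of_lt_of_le hPbpos hPmem.1
          have hGP : Gx n x P ≤ 1 := by
            have := Gx_anti n x hx0 hPbpos hPmem.1
            rw [hGPb] at this
            exact this
          refine ⟨fun i => x i / (P + x i), ⟨fun i => div_nonneg (hx0 i)
            (by have := hx0 i; linarith), hGP⟩, funext fun i => ?_⟩
          exact construct n hn1 x hx0 hPpos ((Lx_eq_zero_iff n x hx0 hn1 hPpos).1 hLP) i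
end

section
/- For every integer n ≥ 2 and every p ∈ ℝ^n, the n × n matrix J(p) with diagonal entries J(p)_{ii} = ∏_{j≠i}(1−p_j) and off-diagonal entries J(p)_{ij} = −p_i ∏_{k∉{i,j}}(1−p_k) (this J(p) is the Jacobian matrix of the map φ(p)_i = p_i ∏_{j≠i}(1−p_j)) has determinant det J(p) = (∏_{i=1}^n (1−p_i))^{n−2} · (1 − Σ_{i=1}^n p_i). -/
open Finset

lemma key_gen (n : ℕ) (hn : 2 ≤ n) (p : Fin n → ℝ) (h : ∀ i, 1 - p i ≠ 0) :
    (Matrix.of fun i j : Fin n =>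
        if i = j then ∏ k ∈ univ.erase i, (1 - p k)
        else -(p i) * ∏ k ∈ (univ.erase i).erase j, (1 - p k)).det =
      (∏ i, (1 - p i)) ^ (n - 2) * (1 - ∑ i, p i) := by
  set q : Fin n → ℝ := fun i => 1 - p i with hq
  set P : ℝ := ∏ i, q i with hPdef
  have hP : P ≠ 0 := Finset.prod_ne_zero_iff.mpr (fun i _ => h i)
  have key : (Matrix.of fun i j : Fin n =>
        if i = j then ∏ k ∈ univ.erase i, (1 - p k)
        else -(p i) * ∏ k ∈ (univ.erase i).erase j, (1 - p k)) =
      Matrix.diagonal (fun i => P / q i ^ 2) *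
        (1 + Matrix.replicateCol Unit (fun i => -(p i * q i / P)) *
          Matrix.replicateRow Unit (fun j => P / q j)) := by
    ext i j
    rw [Matrix.diagonal_mul]
    simp only [Matrix.add_apply, Matrix.one_apply, Matrix.mul_apply, Finset.univ_unique,
      Finset.sum_singleton, Matrix.replicateCol_apply, Matrix.replicateRow_apply, Matrix.of_apply]
    by_cases hij : i = j
    · subst hij
      simp only [if_pos rfl, eq_self_iff_true, ↓reduceIte]
      have hE : ∏ k ∈ univ.erase i, q k = P / q i :=
        (eq_div_iff (h i)).mpr (Finset.prod_erase_mul _ _ (mem_univ i))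
      rw [hE]
      have hpa : p i = 1 - q i := by simp [hq]
      have ha : q i ≠ 0 := h i
      rw [hpa]
      generalize q i = a at ha ⊢
      field_simp
      ring
    · simp only [if_neg hij]
      have hjmem : j ∈ univ.erase i :=
        Finset.mem_erase.mpr ⟨fun h' => hij h'.symm, mem_univ j⟩
      have hE : ∏ k ∈ (univ.erase i).erase j, q k = P / (q i * q j) := by
        rw [eq_div_iff (mul_ne_zero (h i) (h j))]
        have h1 : (∏ k ∈ (univ.erase i).erase j, q k) * q j = ∏ k ∈ univ.erase i, q k :=
          Finset.prod_erase_mul _ _ hjmem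
        have h2 : (∏ k ∈ univ.erase i, q k) * q i = P :=
          Finset.prod_erase_mul _ _ (mem_univ i)
        calc (∏ k ∈ (univ.erase i).erase j, q k) * (q i * q j)
            = ((∏ k ∈ (univ.erase i).erase j, q k) * q j) * q i := by ring
          _ = P := by rw [h1, h2]
      rw [hE]
      have ha : q i ≠ 0 := h i
      have hb : q j ≠ 0 := h j
      generalize q i = a at ha ⊢
      generalize q j = b at hb ⊢
      field_simp
      ring
  rw [key, Matrix.det_mul, Matrix.det_diagonal, Matrix.det_one_add_replicateCol_mul_replicateRow]
  have hdot : dotProduct (fun j => P / q j) (fun i => -(p i * q i / P)) = -∑ i, p i := by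
    rw [dotProduct, ← Finset.sum_neg_distrib]
    refine Finset.sum_congr rfl fun j _ => ?_
    have hb : q j ≠ 0 := h j
    generalize q j = b at hb ⊢
    field_simp
  rw [hdot]
  have hprod : ∏ i, P / q i ^ 2 = P ^ (n - 2) := by
    rw [Finset.prod_div_distrib, Finset.prod_const, Finset.prod_pow, ← hPdef,
      Finset.card_univ, Fintype.card_fin, pow_sub₀ P hP hn, div_eq_mul_inv]
  rw [hprod]
  ring

lemma dense_aux (n : ℕ) : Dense {p : Fin n → ℝ | ∀ i, 1 - p i ≠ 0} := by
  intro x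
  have htend : Filter.Tendsto
      (fun m : ℕ => fun i => if x i = 1 then 1 + (1:ℝ)/(m+1) else x i)
      Filter.atTop (nhds x) := by
    rw [tendsto_pi_nhds]
    intro i
    by_cases hxi : x i = 1
    · simp only [if_pos hxi, hxi]
      have h0 : Filter.Tendsto (fun m : ℕ => (1:ℝ)/(m+1)) Filter.atTop (nhds 0) :=
        tendsto_one_div_add_atTop_nhds_zero_nat
      simpa using tendsto_const_nhds.add h0
    · simp only [if_neg hxi]
      exact tendsto_const_nhds
  refine mem_closure_of_tendsto htend (Filter.Eventually.of_forall fun m => ?_)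
  intro i
  by_cases hxi : x i = 1
  · simp only [if_pos hxi]
    have hpos : (0:ℝ) < (1:ℝ)/(m+1) := by positivity
    intro hcon
    have : (1:ℝ)/(m+1) = 0 := by linarith
    linarith
  · simp only [if_neg hxi]
    exact sub_ne_zero_of_ne (Ne.symm hxi)

theorem stmt_3 (n : ℕ) (hn : 2 ≤ n) (p : Fin n → ℝ) :
    (Matrix.of fun i j : Fin n =>
        if i = j then ∏ k ∈ univ.erase i, (1 - p k)
        else -(p i) * ∏ k ∈ (univ.erase i).erase j, (1 - p k)).det =
      (∏ i, (1 - p i)) ^ (n - 2) * (1 - ∑ i, p i) := by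
  have hcont1 : Continuous fun p : Fin n → ℝ =>
      (Matrix.of fun i j : Fin n =>
        if i = j then ∏ k ∈ univ.erase i, (1 - p k)
        else -(p i) * ∏ k ∈ (univ.erase i).erase j, (1 - p k)).det := by
    apply Continuous.matrix_det
    apply continuous_matrix
    intro i j
    by_cases hij : i = j
    · simp only [Matrix.of_apply, if_pos hij]; fun_prop
    · simp only [Matrix.of_apply, if_neg hij]; fun_prop
  have hcont2 : Continuous fun p : Fin n → ℝ =>
      (∏ i, (1 - p i)) ^ (n - 2) * (1 - ∑ i, p i) := by fun_prop
  have heq := Continuous.ext_on (dense_aux n) hcont1 hcont2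
    (fun x hx => key_gen n hn x hx)
  exact congrFun heq p
end

section
/- For every integer n ≥ 2, Λ_srs ⊆ Λ; that is, every x ∈ ℝ^n with x_i ≥ 0 for all i and Σ_{i=1}^n √x_i ≤ 1 satisfies: there exists p ∈ [0,1]^n with x_i ≤ p_i ∏_{j≠i}(1−p_j) for all i ∈ [n]. -/
open Finset

lemma aux_prod_one_sub {ι : Type*} (s : Finset ι) (f : ι → ℝ)
    (h0 : ∀ i ∈ s, 0 ≤ f i) (h1 : ∀ i ∈ s, f i ≤ 1) :
    1 - ∑ i ∈ s, f i ≤ ∏ i ∈ s, (1 - f i) := by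
  induction s using Finset.cons_induction with
  | empty => simp
  | cons a s ha ih =>
    rw [Finset.sum_cons, Finset.prod_cons]
    have h0a := h0 a (mem_cons_self a s)
    have h1a := h1 a (mem_cons_self a s)
    have ih' := ih (fun i hi => h0 i (mem_cons_of_mem hi))
      (fun i hi => h1 i (mem_cons_of_mem hi))
    have hsnn : 0 ≤ ∑ i ∈ s, f i :=
      Finset.sum_nonneg fun i hi => h0 i (mem_cons_of_mem hi)
    nlinarith

theorem stmt_4 (n : ℕ) (hn : 2 ≤ n) (x : Fin n → ℝ)
    (hx : ∀ i, 0 ≤ x i) (hsum : ∑ i, Real.sqrt (x i) ≤ 1) :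
    ∃ p : Fin n → ℝ, (∀ i, p i ∈ Set.Icc (0:ℝ) 1) ∧
      ∀ i, x i ≤ p i * ∏ j ∈ univ.erase i, (1 - p j) := by
  refine ⟨fun i => Real.sqrt (x i), ?_, ?_⟩
  · intro i
    refine ⟨Real.sqrt_nonneg _, ?_⟩
    calc Real.sqrt (x i) ≤ ∑ j, Real.sqrt (x j) :=
          Finset.single_le_sum (fun j _ => Real.sqrt_nonneg _) (mem_univ i)
      _ ≤ 1 := hsum
  · intro i
    have key : 1 - ∑ j ∈ univ.erase i, Real.sqrt (x j) ≤
        ∏ j ∈ univ.erase i, (1 - Real.sqrt (x j)) := by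
      apply aux_prod_one_sub
      · intro j _; exact Real.sqrt_nonneg _
      · intro j _
        calc Real.sqrt (x j) ≤ ∑ k, Real.sqrt (x k) :=
              Finset.single_le_sum (fun k _ => Real.sqrt_nonneg _) (mem_univ j)
          _ ≤ 1 := hsum
    have hsplit : Real.sqrt (x i) + ∑ j ∈ univ.erase i, Real.sqrt (x j)
        = ∑ j, Real.sqrt (x j) := Finset.add_sum_erase _ (fun j => Real.sqrt (x j)) (mem_univ i)
    have h2 : Real.sqrt (x i) ≤ ∏ j ∈ univ.erase i, (1 - Real.sqrt (x j)) := by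
      have : Real.sqrt (x i) ≤ 1 - ∑ j ∈ univ.erase i, Real.sqrt (x j) := by
        linarith [hsum, hsplit.symm ▸ hsum]
      linarith
    calc x i = Real.sqrt (x i) * Real.sqrt (x i) := (Real.mul_self_sqrt (hx i)).symm
      _ ≤ Real.sqrt (x i) * ∏ j ∈ univ.erase i, (1 - Real.sqrt (x j)) :=
          mul_le_mul_of_nonneg_left h2 (Real.sqrt_nonneg _)
end

section
/- Let n ≥ 2 and let p ∈ ℝ^n have exactly k nonzero components (for some 1 ≤ k ≤ n), each equal to 1/k, and the remaining n−k components equal to 0. Then f(p) := Σ_{i=1}^n (1 − p_i ∏_{j≠i}(1−p_j))² ≥ n−1, with equality if and only if k = 1. -/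
open Finset

lemma aux_pow (k : ℕ) (hk : 2 ≤ k) : (1 - 1/(k:ℝ))^(k-1) ≤ 1/2 := by
  obtain ⟨m, rfl⟩ : ∃ m, k = m + 1 := ⟨k - 1, by omega⟩
  have hm : 1 ≤ m := by omega
  have hm0 : (0:ℝ) < m := by exact_mod_cast hm
  have hb : (2:ℝ) ≤ (1 + 1/(m:ℝ))^m := by
    have h := one_add_mul_le_pow (a := 1/(m:ℝ)) (((by norm_num : (-2:ℝ) ≤ 0)).trans (by positivity)) m
    have h2 : (m:ℝ) * (1/m) = 1 := by field_simp
    nlinarith [h]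
  have heq : (1 - 1/((m:ℝ)+1)) = (1 + 1/(m:ℝ))⁻¹ := by
    rw [eq_comm, inv_eq_iff_eq_inv, eq_comm, inv_eq_one_div]
    field_simp
    rw [add_sub_cancel_right, div_self hm0.ne']
  have hkey : (1 - 1/(((m+1):ℕ):ℝ))^(m+1-1) = ((1 + 1/(m:ℝ))^m)⁻¹ := by
    push_cast
    rw [heq, inv_pow]
  rw [hkey]
  calc ((1 + 1/(m:ℝ))^m)⁻¹ ≤ (2:ℝ)⁻¹ := inv_anti₀ (by norm_num) hb
    _ = 1/2 := by norm_num

theorem stmt_6 (n k : ℕ) (hn : 2 ≤ n) (hk1 : 1 ≤ k) (hkn : k ≤ n)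
    (p : Fin n → ℝ) (s : Finset (Fin n)) (hs : s.card = k)
    (hps : ∀ i ∈ s, p i = 1 / k) (hps' : ∀ i ∉ s, p i = 0) :
    (n : ℝ) - 1 ≤ ∑ i, (1 - p i * ∏ j ∈ univ.erase i, (1 - p j)) ^ 2 ∧
    (∑ i, (1 - p i * ∏ j ∈ univ.erase i, (1 - p j)) ^ 2 = (n : ℝ) - 1 ↔ k = 1) := by
  have hk0 : (0:ℝ) < k := by exact_mod_cast hk1
  -- product computation for i ∈ s
  have hprod : ∀ i ∈ s, ∏ j ∈ univ.erase i, (1 - p j) = (1 - 1/(k:ℝ))^(k-1) := by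
    intro i hi
    have hsub : s.erase i ⊆ univ.erase i := Finset.erase_subset_erase i s.subset_univ
    rw [← Finset.prod_subset hsub (by
      intro x hx hx'
      have hxs : x ∉ s := by
        intro hxs
        exact hx' (Finset.mem_erase.mpr ⟨(Finset.mem_erase.mp hx).1, hxs⟩)
      rw [hps' x hxs]; ring)]
    rw [Finset.prod_congr rfl (fun x hx => by
      rw [hps x (Finset.mem_of_mem_erase hx)]), Finset.prod_const,
      Finset.card_erase_of_mem hi, hs]
  -- split the sum
  have hsum : ∑ i, (1 - p i * ∏ j ∈ univ.erase i, (1 - p j)) ^ 2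
      = k * (1 - (1/(k:ℝ)) * (1 - 1/(k:ℝ))^(k-1))^2 + ((n:ℝ) - k) := by
    rw [← Finset.sum_add_sum_compl s]
    congr 1
    · rw [Finset.sum_congr rfl (fun i hi => by rw [hprod i hi, hps i hi]),
        Finset.sum_const, hs]
      simp [mul_comm]
    · have hone : ∀ i ∈ sᶜ, (1 - p i * ∏ j ∈ univ.erase i, (1 - p j)) ^ 2 = 1 := by
        intro i hi
        rw [hps' i (Finset.mem_compl.mp hi)]
        ring
      rw [Finset.sum_congr rfl hone, Finset.sum_const, Finset.card_compl, hs]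
      simp [Nat.cast_sub hkn]
  rw [hsum]
  rcases eq_or_lt_of_le hk1 with hk | hk
  · -- k = 1
    have hkeq : k = 1 := hk.symm
    subst hkeq
    norm_num
  · -- k ≥ 2
    have hk2 : 2 ≤ k := hk
    have hpow := aux_pow k hk2
    have hpow0 : 0 < (1 - 1/(k:ℝ))^(k-1) := by
      apply pow_pos
      have h1k : (2:ℝ) ≤ k := by exact_mod_cast hk2
      have : 1/(k:ℝ) < 1 := by
        rw [div_lt_one hk0]; linarith
      linarith
    set t : ℝ := (1/(k:ℝ)) * (1 - 1/(k:ℝ))^(k-1) with ht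
    have ht0 : 0 < t := by positivity
    have ht1 : t ≤ 1/(2*k) := by
      rw [ht]
      calc (1/(k:ℝ)) * (1 - 1/(k:ℝ))^(k-1) ≤ (1/(k:ℝ)) * (1/2) := by
            apply mul_le_mul_of_nonneg_left hpow (by positivity)
        _ = 1/(2*k) := by ring
    have hk2' : (2:ℝ) ≤ k := by exact_mod_cast hk2
    have h1 : t * (2*(k:ℝ)) ≤ 1 := (le_div_iff₀ (by positivity : (0:ℝ) < 2*k)).mp ht1
    have hstrict : (k:ℝ) - 1 < k * (1 - t)^2 := by
      nlinarith [mul_pos hk0 (mul_pos ht0 ht0), h1]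
    constructor
    · linarith
    · constructor
      · intro h; exfalso; linarith
      · intro h; omega
end

section
/- Let n ≥ 2, let c > 1/n and a₁ > √n·(c − 1/n) with a₁ > 0. Set a₂² = (n−1)·a₁² / (n·a₁² − (nc−1)²), ζ = (a₁⁻² − a₂⁻²)/n, and M = ζ·𝟙 + a₂⁻²·I (an n × n matrix, where 𝟙 is the all-ones matrix and I the identity). Then for every i ∈ [n], the standard basis vector e_i satisfies (e_i − c·𝟏)ᵀ M (e_i − c·𝟏) = 1, where 𝟏 = (1,…,1) ∈ ℝ^n; that is, each e_i lies on the boundary of the ellipsoid {x : (x − c𝟏)ᵀ M (x − c𝟏) ≤ 1}. -/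
open Matrix

theorem stmt_14 (n : ℕ) (hn : 2 ≤ n) (c a₁ : ℝ)
    (hc : 1 / n < c) (ha₁pos : 0 < a₁) (ha₁ : Real.sqrt n * (c - 1 / n) < a₁)
    (a2sq : ℝ)
    (ha2sq : a2sq = ((n : ℝ) - 1) * a₁ ^ 2 / (n * a₁ ^ 2 - (n * c - 1) ^ 2))
    (M : Matrix (Fin n) (Fin n) ℝ)
    (hM : M = (((a₁ ^ 2)⁻¹ - a2sq⁻¹) / n) • (Matrix.of fun _ _ : Fin n => (1 : ℝ)) +
        a2sq⁻¹ • (1 : Matrix (Fin n) (Fin n) ℝ)) :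
    ∀ i : Fin n,
      (Pi.single i 1 - fun _ => c) ⬝ᵥ M.mulVec (Pi.single i 1 - fun _ => c) = 1 := by
  intro i
  have hn0 : (0:ℝ) < n := by positivity
  have hn1 : (1:ℝ) ≤ (n:ℝ) - 1 := by
    have : (2:ℝ) ≤ n := by exact_mod_cast hn
    linarith
  have hnc : 0 < (n:ℝ) * c - 1 := by
    have := (div_lt_iff₀ hn0).mp hc
    nlinarith
  have hD : 0 < (n:ℝ) * a₁ ^ 2 - ((n:ℝ) * c - 1) ^ 2 := by
    have hs : Real.sqrt n * (c - 1 / n) = ((n:ℝ) * c - 1) / Real.sqrt n := by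
      rw [eq_div_iff (by positivity : Real.sqrt n ≠ 0), mul_right_comm,
        Real.mul_self_sqrt hn0.le]
      field_simp
    rw [hs] at ha₁
    have h2 : ((n:ℝ) * c - 1) < a₁ * Real.sqrt n := by
      rwa [div_lt_iff₀ (by positivity)] at ha₁
    have h3 : ((n:ℝ) * c - 1) ^ 2 < (a₁ * Real.sqrt n) ^ 2 := by
      apply sq_lt_sq' _ h2
      nlinarith [Real.sqrt_nonneg (n:ℝ), ha₁pos]
    have h4 : (a₁ * Real.sqrt n) ^ 2 = n * a₁ ^ 2 := by
      rw [mul_pow, Real.sq_sqrt hn0.le]; ring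
    linarith [h3, h4.symm.le]
  have ha2pos : 0 < a2sq := by
    rw [ha2sq]; positivity
  have ha2inv : a2sq⁻¹ = ((n:ℝ) * a₁ ^ 2 - ((n:ℝ) * c - 1) ^ 2) / (((n:ℝ) - 1) * a₁ ^ 2) := by
    rw [ha2sq, inv_div]
  set v : Fin n → ℝ := fun j => (if j = i then (1:ℝ) else 0) - c with hv
  have hveq : (Pi.single i 1 - fun _ => c) = v := by
    funext j
    simp [hv, Pi.single_apply]
  have hS : ∑ j, v j = 1 - n * c := by
    simp [hv, Finset.sum_sub_distrib, Finset.sum_ite_eq', Finset.card_univ]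
  have hQ : ∑ j, v j * v j = 1 - 2 * c + n * c ^ 2 := by
    have : ∀ j : Fin n, v j * v j = (if j = i then (1:ℝ) else 0) - 2 * c * (if j = i then (1:ℝ) else 0) + c ^ 2 := by
      intro j; by_cases h : j = i <;> simp [hv, h] <;> ring
    rw [Finset.sum_congr rfl fun j _ => this j]
    simp [Finset.sum_add_distrib, Finset.sum_sub_distrib, ← Finset.mul_sum,
      Finset.sum_ite_eq', Finset.card_univ]
    try ring
  set ζ := ((a₁ ^ 2)⁻¹ - a2sq⁻¹) / n with hζ
  have hmain : (Pi.single i 1 - fun _ => c) ⬝ᵥ M.mulVec (Pi.single i 1 - fun _ => c)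
      = ζ * (1 - n * c) ^ 2 + a2sq⁻¹ * (1 - 2 * c + n * c ^ 2) := by
    rw [hveq, hM]
    simp only [dotProduct, Matrix.mulVec, Matrix.add_apply, Matrix.smul_apply,
      Matrix.of_apply, Matrix.one_apply, smul_eq_mul]
    have hrow : ∀ j : Fin n, (∑ k, (ζ * 1 + a2sq⁻¹ * (if j = k then (1:ℝ) else 0)) * v k)
        = ζ * (1 - n * c) + a2sq⁻¹ * v j := by
      intro j
      have : ∀ k : Fin n, (ζ * 1 + a2sq⁻¹ * (if j = k then (1:ℝ) else 0)) * v k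
          = ζ * v k + (if k = j then a2sq⁻¹ * v k else 0) := by
        intro k; by_cases h : j = k <;> simp [h, eq_comm] <;> ring
      rw [Finset.sum_congr rfl fun k _ => this k]
      rw [Finset.sum_add_distrib, ← Finset.mul_sum, hS, Finset.sum_ite_eq']
      simp
    rw [Finset.sum_congr rfl fun j _ => by rw [hrow j]]
    rw [Finset.sum_congr rfl (fun j _ => mul_add (v j) _ _ : ∀ j ∈ Finset.univ, _)]
    rw [Finset.sum_add_distrib]
    have h1 : ∑ j, v j * (ζ * (1 - ↑n * c)) = (1 - n*c) * (ζ * (1 - n*c)) := by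
      rw [← Finset.sum_mul, hS]
    have h2 : ∑ j, v j * (a2sq⁻¹ * v j) = a2sq⁻¹ * (1 - 2*c + n * c^2) := by
      rw [← hQ, Finset.mul_sum]
      exact Finset.sum_congr rfl fun j _ => by ring
    rw [h1, h2]; ring
  rw [hmain, hζ, ha2inv]
  have ha1 : a₁ ≠ 0 := ne_of_gt ha₁pos
  have hn1' : ((n:ℝ) - 1) ≠ 0 := by linarith
  have hnne : (n:ℝ) ≠ 0 := ne_of_gt hn0
  field_simp
  ring
end

section
/- For every integer n ≥ 2 and every x ∈ ℝ^n with x_i ≥ 0 for all i, the set P(x) = {p ∈ [0,1]^n : x_i ≤ p_i ∏_{j≠i}(1−p_j) for all i ∈ [n]} is a convex subset of ℝ^n. -/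
open Finset

lemma aux_prod_combo {ι : Type*} (s : Finset ι) (a b : ℝ) (ha : 0 ≤ a) (hb : 0 ≤ b)
    (hab : a + b = 1) (u v : ι → ℝ) (hu : ∀ k ∈ s, 0 ≤ u k) (hv : ∀ k ∈ s, 0 ≤ v k)
    (x : ℝ) (hx : 0 ≤ x) (hxu : x ≤ ∏ k ∈ s, u k) (hxv : x ≤ ∏ k ∈ s, v k) :
    x ≤ ∏ k ∈ s, (a * u k + b * v k) := by
  have hpu : 0 ≤ ∏ k ∈ s, u k := Finset.prod_nonneg hu
  have hpv : 0 ≤ ∏ k ∈ s, v k := Finset.prod_nonneg hv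
  calc x = x ^ (a + b) := by rw [hab, Real.rpow_one]
    _ = x ^ a * x ^ b := Real.rpow_add' hx (by rw [hab]; norm_num)
    _ ≤ (∏ k ∈ s, u k) ^ a * (∏ k ∈ s, v k) ^ b := by
        apply mul_le_mul (Real.rpow_le_rpow hx hxu ha) (Real.rpow_le_rpow hx hxv hb)
          (Real.rpow_nonneg hx b) (Real.rpow_nonneg hpu a)
    _ = (∏ k ∈ s, (u k) ^ a) * ∏ k ∈ s, (v k) ^ b := by
        rw [← Real.finset_prod_rpow s u hu a, ← Real.finset_prod_rpow s v hv b]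
    _ = ∏ k ∈ s, ((u k) ^ a * (v k) ^ b) := (Finset.prod_mul_distrib).symm
    _ ≤ ∏ k ∈ s, (a * u k + b * v k) := by
        apply Finset.prod_le_prod
        · intro k hk
          exact mul_nonneg (Real.rpow_nonneg (hu k hk) a) (Real.rpow_nonneg (hv k hk) b)
        · intro k hk
          exact Real.geom_mean_le_arith_mean2_weighted ha hb (hu k hk) (hv k hk) hab

theorem stmt_16 (n : ℕ) (hn : 2 ≤ n) (x : Fin n → ℝ) (hx : ∀ i, 0 ≤ x i) :
    Convex ℝ {p : Fin n → ℝ | (∀ i, p i ∈ Set.Icc (0:ℝ) 1) ∧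
      ∀ i, x i ≤ p i * ∏ j ∈ univ.erase i, (1 - p j)} := by
  rintro p ⟨hp1, hp2⟩ q ⟨hq1, hq2⟩ a b ha hb hab
  constructor
  · intro i
    have h1 := hp1 i; have h2 := hq1 i
    simp only [Set.mem_Icc] at h1 h2 ⊢
    constructor
    · exact add_nonneg (mul_nonneg ha h1.1) (mul_nonneg hb h2.1)
    · calc a * p i + b * q i ≤ a * 1 + b * 1 := by
            apply add_le_add (mul_le_mul_of_nonneg_left h1.2 ha)
              (mul_le_mul_of_nonneg_left h2.2 hb)
        _ = 1 := by rw [mul_one, mul_one, hab]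
  · intro i
    set u : Fin n → ℝ := fun k => if k = i then p k else 1 - p k with hu_def
    set v : Fin n → ℝ := fun k => if k = i then q k else 1 - q k with hv_def
    have key : x i ≤ ∏ k ∈ univ, (a * u k + b * v k) := by
      apply aux_prod_combo univ a b ha hb hab u v _ _ (x i) (hx i)
      · rw [← Finset.mul_prod_erase univ u (mem_univ i)]
        simp only [hu_def, if_pos rfl]
        calc x i ≤ p i * ∏ j ∈ univ.erase i, (1 - p j) := hp2 i
          _ = p i * ∏ j ∈ univ.erase i, (if j = i then p j else 1 - p j) := by
              congr 1; apply Finset.prod_congr rfl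
              intro j hj; rw [if_neg (Finset.ne_of_mem_erase hj)]
        
      · rw [← Finset.mul_prod_erase univ v (mem_univ i)]
        simp only [hv_def, if_pos rfl]
        calc x i ≤ q i * ∏ j ∈ univ.erase i, (1 - q j) := hq2 i
          _ = q i * ∏ j ∈ univ.erase i, (if j = i then q j else 1 - q j) := by
              congr 1; apply Finset.prod_congr rfl
              intro j hj; rw [if_neg (Finset.ne_of_mem_erase hj)]
      · intro k _
        simp only [hu_def]
        split
        · exact (hp1 k).1
        · linarith [(hp1 k).2]
      · intro k _
        simp only [hv_def]
        split
        · exact (hq1 k).1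
        · linarith [(hq1 k).2]
    calc x i ≤ ∏ k ∈ univ, (a * u k + b * v k) := key
      _ = (a • p + b • q) i * ∏ j ∈ univ.erase i, (1 - (a • p + b • q) j) := by
          rw [← Finset.mul_prod_erase univ _ (mem_univ i)]
          simp only [hu_def, hv_def, if_pos rfl, Pi.add_apply, Pi.smul_apply, smul_eq_mul]
          congr 1
          apply Finset.prod_congr rfl
          intro j hj
          rw [if_neg (Finset.ne_of_mem_erase hj), if_neg (Finset.ne_of_mem_erase hj)]
          ring_nf
          linarith [mul_comm a (p j)]
end

section
/- The sequence g(n) = 1 / (2·(1 − (1 − 1/n)^{n−1})), defined for integers n ≥ 2, satisfies g(2) = 1, is strictly decreasing in n, and converges to e/(2(e−1)) as n → ∞. -/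
open Filter

lemma key_step (n : ℕ) (hn : 2 ≤ n) :
    (1 - 1 / ((n : ℝ) + 1)) ^ n < (1 - 1 / (n : ℝ)) ^ (n - 1) := by
  have hx : (2:ℝ) ≤ (n:ℝ) := by exact_mod_cast hn
  set x : ℝ := (n:ℝ) with hxdef
  have hx0 : 0 < x := by linarith
  have h1 : (0:ℝ) < x + 1 := by linarith
  have hb : 1 - 1/(x+1) = x/(x+1) := by field_simp; ring
  have ha : 1 - 1/x = (x-1)/x := by field_simp
  have hbpos : 0 < x/(x+1) := div_pos hx0 h1
  have hcast : ((n-1:ℕ):ℝ) = x - 1 := by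
    have h : 1 ≤ n := by omega
    push_cast [Nat.cast_sub h]; ring
  have bern : 1 + ((n-1:ℕ):ℝ) * (-(1/x^2)) ≤ (1 + (-(1/x^2)))^(n-1) := by
    apply one_add_mul_le_pow
    have hx2 : (0:ℝ) < x^2 := by positivity
    have h4 : 1/x^2 ≤ 2 := by rw [div_le_iff₀ hx2]; nlinarith
    linarith
  rw [hcast] at bern
  have hbase : (1:ℝ) + (-(1/x^2)) = 1 - 1/x^2 := by ring
  rw [hbase] at bern
  have core : x/(x+1) < (1 - 1/x^2)^(n-1) := by
    have h2 : x/(x+1) < 1 + (x-1) * (-(1/x^2)) := by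
      rw [div_lt_iff₀ h1]
      have hx2 : (0:ℝ) < x^2 := by positivity
      have : 1 + (x-1) * (-(1/x^2)) = 1 - (x-1)/x^2 := by ring
      rw [this, sub_mul, div_mul_eq_mul_div, lt_sub_iff_add_lt, ← lt_sub_iff_add_lt',
        div_lt_iff₀ hx2]
      nlinarith
    linarith
  have hfact : (1 - 1/x^2) * (x/(x+1)) = (x-1)/x := by
    field_simp; ring
  rw [hb, ha, ← hfact, mul_pow]
  have hsplit : (x/(x+1))^n = (x/(x+1))^(n-1) * (x/(x+1)) := by
    rw [← pow_succ]; congr 1; omega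
  rw [hsplit]
  have hp : 0 < (x/(x+1))^(n-1) := pow_pos hbpos _
  calc (x/(x+1))^(n-1) * (x/(x+1)) < (x/(x+1))^(n-1) * (1 - 1/x^2)^(n-1) :=
        mul_lt_mul_of_pos_left core hp
    _ = (1 - 1/x^2)^(n-1) * (x/(x+1))^(n-1) := mul_comm _ _

noncomputable def gfun (n : ℕ) : ℝ := (1 - 1 / (n : ℝ)) ^ (n - 1)

lemma gfun_pos {n : ℕ} (hn : 2 ≤ n) : 0 < gfun n := by
  have hx : (2:ℝ) ≤ (n:ℝ) := by exact_mod_cast hn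
  have : (0:ℝ) < 1 - 1/(n:ℝ) := by
    have hx0 : (0:ℝ) < (n:ℝ) := by linarith
    have : 1/(n:ℝ) ≤ 1/2 := by
      apply one_div_le_one_div_of_le <;> linarith
    linarith
  exact pow_pos this _

lemma gfun_lt_one {n : ℕ} (hn : 2 ≤ n) : gfun n < 1 := by
  have hx : (2:ℝ) ≤ (n:ℝ) := by exact_mod_cast hn
  have h0 : (0:ℝ) ≤ 1 - 1/(n:ℝ) := le_of_lt (by
    have : 1/(n:ℝ) ≤ 1/2 := by apply one_div_le_one_div_of_le <;> linarith
    linarith)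
  have h1 : 1 - 1/(n:ℝ) < 1 := by
    have : 0 < 1/(n:ℝ) := by positivity
    linarith
  exact pow_lt_one₀ h0 h1 (by omega)

lemma gfun_anti : ∀ m n : ℕ, 2 ≤ m → m < n → gfun n < gfun m := by
  intro m n hm hmn
  induction n with
  | zero => omega
  | succ k ih =>
    have hstep : ∀ j : ℕ, 2 ≤ j → gfun (j+1) < gfun j := by
      intro j hj
      have := key_step j hj
      unfold gfun
      simpa using this
    rcases Nat.lt_or_ge m k with h | h
    · exact lt_trans (hstep k (by omega)) (ih h)
    · have : m = k := by omega
      subst this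
      exact hstep m hm

theorem stmt_19 :
    (fun n : ℕ => 1 / (2 * (1 - (1 - 1 / (n : ℝ)) ^ (n - 1)))) 2 = 1 ∧
    (∀ m n : ℕ, 2 ≤ m → m < n →
      1 / (2 * (1 - (1 - 1 / (n : ℝ)) ^ (n - 1))) <
        1 / (2 * (1 - (1 - 1 / (m : ℝ)) ^ (m - 1)))) ∧
    Tendsto (fun n : ℕ => 1 / (2 * (1 - (1 - 1 / (n : ℝ)) ^ (n - 1)))) atTop
      (nhds (Real.exp 1 / (2 * (Real.exp 1 - 1)))) := by
  refine ⟨by norm_num, ?_, ?_⟩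
  · intro m n hm hmn
    have hn : 2 ≤ n := by omega
    have h1 : gfun n < gfun m := gfun_anti m n hm hmn
    have h2 : gfun m < 1 := gfun_lt_one hm
    show 1 / (2 * (1 - gfun n)) < 1 / (2 * (1 - gfun m))
    apply one_div_lt_one_div_of_lt
    · linarith
    · linarith
  · have hg : Tendsto gfun atTop (nhds (Real.exp (-1))) := by
      have h1 : Tendsto (fun n : ℕ => (1 + (-1) / (n:ℝ)) ^ n) atTop
          (nhds (Real.exp (-1))) := Real.tendsto_one_add_div_pow_exp (-1)
      have h2 : Tendsto (fun n : ℕ => 1 - 1/(n:ℝ)) atTop (nhds 1) := by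
        simpa using (tendsto_const_nhds : Tendsto (fun _ : ℕ => (1:ℝ)) atTop (nhds 1)).sub tendsto_one_div_atTop_nhds_zero_nat
      have h3 := h1.div h2 one_ne_zero
      rw [div_one] at h3
      apply h3.congr'
      filter_upwards [eventually_ge_atTop 2] with n hn
      have hx : (2:ℝ) ≤ (n:ℝ) := by exact_mod_cast hn
      have hne : (1:ℝ) - 1/(n:ℝ) ≠ 0 := by
        have : 1/(n:ℝ) ≤ 1/2 := by apply one_div_le_one_div_of_le <;> linarith
        intro h; linarith [h]
      have hone : (1 + (-1)/(n:ℝ)) = 1 - 1/(n:ℝ) := by ring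
      simp only [Pi.div_apply]
      rw [hone]
      unfold gfun
      rw [eq_comm, eq_div_iff hne, ← pow_succ]
      congr 1
      omega
    have he1 : (1:ℝ) < Real.exp 1 := by
      nlinarith [Real.exp_one_gt_d9]
    have heneg : Real.exp (-1) < 1 := by
      rw [Real.exp_neg]
      rw [inv_lt_one_iff₀]
      right; exact he1
    have hden : (2:ℝ) * (1 - Real.exp (-1)) ≠ 0 := by
      have := Real.exp_pos (-1); nlinarith
    have h4 : Tendsto (fun n : ℕ => 2 * (1 - gfun n)) atTop
        (nhds (2 * (1 - Real.exp (-1)))) :=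
      (tendsto_const_nhds.sub hg).const_mul 2
    have h5 : Tendsto (fun n : ℕ => 1 / (2 * (1 - gfun n))) atTop
        (nhds (1 / (2 * (1 - Real.exp (-1))))) :=
      Tendsto.div tendsto_const_nhds h4 hden
    have heq : 1 / (2 * (1 - Real.exp (-1))) = Real.exp 1 / (2 * (Real.exp 1 - 1)) := by
      rw [Real.exp_neg]
      have he0 : Real.exp 1 ≠ 0 := Real.exp_ne_zero 1
      field_simp
    rw [heq] at h5
    exact h5
end
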